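/- arXiv:2303.09203 — 6 statements merged into one kernel-verified Lean document; each statement's English description precedes it below -/
import Mathlib

section
/- Let m ∈ ℤ and let h₁, h₂ : ℤ → ℂ be such that the double family ((n,k) ↦ h₁((m+n+|n+m|)/2 + k)·h₂((n−m−|n+m|)/2 − k)) over n ∈ ℤ, k ∈ ℕ is absolutely summable, and the families (k ↦ h₁(k)) over k ∈ ℕ and (n ↦ h₂(−m−n)) over n ∈ ℕ are absolutely summable. Then ∑_{n∈ℤ} ∑_{k=0}^{∞} (−1)^n · h₁((m+n+|n+m|)/2 + k) · h₂((n−m−|n+m|)/2 − k) = (∑_{k=0}^{∞} (−1)^k h₁(k)) · (∑_{n=0}^{∞} (−1)^{m+n} h₂(−m−n)). -/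
/-!
The map `(a, b) ↦ (a - b - m, min a b)` is a bijection `ℕ × ℕ ≃ ℤ × ℕ` under which the
arguments of `h₁` and `h₂` in the double sum become `a` and `-m - b`, and `(-1) ^ (a - b - m)`
becomes `(-1) ^ a * (-1) ^ (m + b)`. So the double sum is the sum over `ℕ × ℕ` of the product
family, which by absolute convergence is the product of the two sums.
-/

lemma neg_one_zpow_sub {α : Type*} [DivisionRing α] (x y : ℤ) :
    (-1 : α) ^ (x - y) = (-1) ^ (x + y) := by
  rw [show x + y = x - y + 2 * y by ring, zpow_add₀ (neg_ne_zero.mpr one_ne_zero),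
    (even_two_mul y).neg_one_zpow, mul_one]

def diffMinEquiv (m : ℤ) : ℕ × ℕ ≃ ℤ × ℕ where
  toFun q := ((q.1 : ℤ) - q.2 - m, min q.1 q.2)
  invFun p := ((p.1 + m).toNat + p.2, (-(p.1 + m)).toNat + p.2)
  left_inv := fun ⟨a, b⟩ => by
    simp only [Prod.mk.injEq]
    omega
  right_inv := fun ⟨n, k⟩ => by
    simp only [Prod.mk.injEq]
    omega

section diffMinEquiv

variable (m : ℤ) (a b : ℕ)

lemma diffMinEquiv_apply : diffMinEquiv m (a, b) = ((a : ℤ) - b - m, min a b) := rfl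

lemma diffMinEquiv_first_index :
    (m + ((a : ℤ) - b - m) + |(a : ℤ) - b - m + m|) / 2 + (min a b : ℕ) = a := by
  rw [abs_eq_max_neg]
  omega

lemma diffMinEquiv_second_index :
    ((a : ℤ) - b - m - m - |(a : ℤ) - b - m + m|) / 2 - (min a b : ℕ) = -m - b := by
  rw [abs_eq_max_neg]
  omega

lemma neg_one_zpow_diffMinEquiv {α : Type*} [DivisionRing α] :
    (-1 : α) ^ ((a : ℤ) - b - m) = (-1) ^ a * (-1) ^ (m + b) := by
  rw [sub_sub, neg_one_zpow_sub, zpow_add₀ (neg_ne_zero.mpr one_ne_zero), zpow_natCast,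
    add_comm (b : ℤ)]

end diffMinEquiv

/-- **Lemma 2** (factorization of the double sum).
Let `m ∈ ℤ` and `h₁ h₂ : ℤ → ℂ` be such that the double family
`(n,k) ↦ h₁((m+n+|n+m|)/2 + k) · h₂((n−m−|n+m|)/2 − k)` (over `n ∈ ℤ`, `k ∈ ℕ`)
is absolutely summable, and the families `k ↦ h₁ k` (over `k ∈ ℕ`) and
`n ↦ h₂(−m−n)` (over `n ∈ ℕ`) are absolutely summable.  Then
`∑_{n∈ℤ} ∑_{k≥0} (−1)ⁿ h₁((m+n+|n+m|)/2+k) h₂((n−m−|n+m|)/2−k)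
  = (∑_{k≥0} (−1)ᵏ h₁(k)) · (∑_{n≥0} (−1)^{m+n} h₂(−m−n))`. -/
theorem stmt0 (m : ℤ) (h₁ h₂ : ℤ → ℂ)
    (hd : Summable fun p : ℤ × ℕ =>
      ‖h₁ ((m + p.1 + |p.1 + m|) / 2 + p.2) * h₂ ((p.1 - m - |p.1 + m|) / 2 - p.2)‖)
    (hs₁ : Summable fun k : ℕ => ‖h₁ k‖)
    (hs₂ : Summable fun n : ℕ => ‖h₂ (-m - n)‖) :
    ∑' n : ℤ, ∑' k : ℕ,
        (-1 : ℂ) ^ n * (h₁ ((m + n + |n + m|) / 2 + k) * h₂ ((n - m - |n + m|) / 2 - k))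
      = (∑' k : ℕ, (-1 : ℂ) ^ k * h₁ k) * ∑' n : ℕ, (-1 : ℂ) ^ (m + n) * h₂ (-m - n) := by
  set f : ℤ × ℕ → ℂ := fun p =>
    (-1 : ℂ) ^ p.1 * (h₁ ((m + p.1 + |p.1 + m|) / 2 + p.2) * h₂ ((p.1 - m - |p.1 + m|) / 2 - p.2))
  have hf : Summable f := .of_norm <| by simpa [f, norm_mul, norm_zpow] using hd
  rw [← hf.tsum_prod' hf.prod_factor,
    tsum_mul_tsum_of_summable_norm (by simpa using hs₁) (by simpa using hs₂),
    ← (diffMinEquiv m).tsum_eq f]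
  refine tsum_congr fun ⟨a, b⟩ => ?_
  simp only [f, diffMinEquiv_apply, diffMinEquiv_first_index, diffMinEquiv_second_index,
    neg_one_zpow_diffMinEquiv]
  ring
end

section
/- Let n ∈ ℕ, m ∈ ℤ, x, y ∈ ℝ, and set ᾱ = x + iy and α = x + m + iy. Then the function ν ↦ Γ(x + iy + n/2 − iν)/Γ(1 − m − x − iy + n/2 + iν) (that is, ν ↦ Γ(ᾱ − s̄)/Γ(1 − α + s), where s = n/2 + iν and s̄ = −n/2 + iν) is a meromorphic function of ν ∈ ℂ whose poles are exactly the points ν = −i(ᾱ + (m + |n − m|)/2 + k) for k ∈ ℕ ∪ {0}, and each of these poles is simple. -/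
open Complex

/-!
`Γ` is holomorphic and nonvanishing off the non-positive integers, and `Γ(s) = Γ(s + 1)/s`
shows by induction that it has a simple pole at each `-k`. Substituting `w = ᾱ + n/2 - iν`, the
function becomes `Γ(w)/Γ(N - w)` with `N = 1 - m + n ∈ ℤ`, whose order at `w` is
`ord Γ(w) - ord Γ(N - w)`. This is negative exactly when `w = -j` is a pole of the numerator and
`N + j` is a positive integer, where `Γ` is finite and nonzero; the order is then `-1`. The
condition `N + j > 0` reads `j ≥ max(0, m - n)`, which is where the shift `(m + |n - m|)/2` comes
from.
-/

namespace Complex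

/-- Valid also at `s = 0`, where both sides are the junk value `0`. -/
theorem Gamma_eq_inv_mul_Gamma_add_one (s : ℂ) : Gamma s = s⁻¹ * Gamma (s + 1) := by
  rcases eq_or_ne s 0 with rfl | hs
  · simp [Gamma_zero]
  · rw [Gamma_add_one s hs, inv_mul_cancel_left₀ hs]

theorem meromorphicOrderAt_Gamma_of_ne {z : ℂ} (hz : ∀ k : ℕ, z ≠ -k) :
    meromorphicOrderAt Gamma z = 0 :=
  (MeromorphicNFOn.Gamma (Set.mem_univ z)).meromorphicOrderAt_eq_zero_iff.2 (Gamma_ne_zero hz)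

theorem meromorphicOrderAt_Gamma_add_one {z : ℂ} (hz : z ≠ 0) :
    meromorphicOrderAt Gamma (z + 1) = meromorphicOrderAt Gamma z := by
  have hGamma : Gamma = (·⁻¹) * (Gamma ∘ (· + 1)) := funext Gamma_eq_inv_mul_Gamma_add_one
  rw [hGamma, meromorphicOrderAt_mul_of_ne_zero (analyticAt_inv hz) (inv_ne_zero hz),
    meromorphicOrderAt_comp_add_const_eq_meromorphicOrderAt, ← hGamma]

theorem meromorphicOrderAt_Gamma_zero : meromorphicOrderAt Gamma 0 = -1 := by
  have hGamma : Gamma = (Gamma ∘ (· + 1)) / id := by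
    ext s
    rw [Gamma_eq_inv_mul_Gamma_add_one, inv_mul_eq_div]
    rfl
  have hOne : meromorphicOrderAt Gamma 1 = 0 :=
    meromorphicOrderAt_Gamma_of_ne fun k hk => by
      have : (1 : ℤ) = -k := by exact_mod_cast hk
      omega
  rw [hGamma, meromorphicOrderAt_div _ (MeromorphicAt.id 0),
    meromorphicOrderAt_comp_add_const_eq_meromorphicOrderAt, zero_add, hOne, meromorphicOrderAt_id]
  · rfl
  · exact (Meromorphic.Gamma _).comp_analyticAt (by fun_prop)

theorem meromorphicOrderAt_Gamma_neg_nat (k : ℕ) : meromorphicOrderAt Gamma (-k) = -1 := by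
  induction k with
  | zero => simpa using meromorphicOrderAt_Gamma_zero
  | succ k ih =>
    rw [← meromorphicOrderAt_Gamma_add_one (by norm_cast)]
    simpa using ih

theorem meromorphic_Gamma_div_Gamma_sub (c : ℂ) : Meromorphic fun w => Gamma w / Gamma (c - w) :=
  fun u => (Meromorphic.Gamma u).div ((Meromorphic.Gamma _).comp_analyticAt (by fun_prop))

theorem meromorphicOrderAt_Gamma_div_Gamma_sub (c u : ℂ) :
    meromorphicOrderAt (fun w => Gamma w / Gamma (c - w)) u =
      meromorphicOrderAt Gamma u - meromorphicOrderAt Gamma (c - u) := by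
  rw [← meromorphicOrderAt_comp_of_deriv_ne_zero (f := Gamma) (g := (c - ·)) (by fun_prop)
    (by simp)]
  exact meromorphicOrderAt_div (Meromorphic.Gamma u)
    ((Meromorphic.Gamma _).comp_analyticAt (by fun_prop))

theorem meromorphicOrderAt_Gamma_div_Gamma_intCast_sub_neg_nat {N : ℤ} {j : ℕ}
    (hj : 0 < N + j) :
    meromorphicOrderAt (fun w => Gamma w / Gamma (N - w)) (-j) = -1 := by
  rw [meromorphicOrderAt_Gamma_div_Gamma_sub, meromorphicOrderAt_Gamma_neg_nat,
    meromorphicOrderAt_Gamma_of_ne fun k hk => ?_, sub_zero]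
  have : N + j = -k := by exact_mod_cast (sub_neg_eq_add (N : ℂ) j) ▸ hk
  omega

theorem meromorphicOrderAt_Gamma_div_Gamma_intCast_sub_nonneg {N : ℤ} {u : ℂ}
    (hu : ∀ j : ℕ, u = -j → N + j ≤ 0) :
    0 ≤ meromorphicOrderAt (fun w => Gamma w / Gamma (N - w)) u := by
  rw [meromorphicOrderAt_Gamma_div_Gamma_sub]
  by_cases hpole : ∃ j : ℕ, u = -j
  · obtain ⟨j, rfl⟩ := hpole
    have hsum : (N : ℂ) - -j = -((-(N + j)).toNat : ℕ) := by
      have : ((-(N + j)).toNat : ℤ) = -(N + j) := Int.toNat_of_nonneg (by linarith [hu j rfl])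
      rw [show (((-(N + j)).toNat : ℕ) : ℂ) = ((-(N + j) : ℤ) : ℂ) by exact_mod_cast this]
      push_cast
      ring
    rw [hsum, meromorphicOrderAt_Gamma_neg_nat, meromorphicOrderAt_Gamma_neg_nat]
    decide
  · push Not at hpole
    rw [meromorphicOrderAt_Gamma_of_ne hpole, zero_sub]
    by_cases hv : ∃ k : ℕ, (N : ℂ) - u = -k
    · obtain ⟨k, hk⟩ := hv
      rw [hk, meromorphicOrderAt_Gamma_neg_nat]
      decide
    · push Not at hv
      rw [meromorphicOrderAt_Gamma_of_ne hv, neg_zero]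

theorem meromorphicOrderAt_Gamma_div_Gamma_intCast_sub_lt_zero_iff (N : ℤ) (u : ℂ) :
    meromorphicOrderAt (fun w => Gamma w / Gamma (N - w)) u < 0 ↔
      ∃ j : ℕ, u = -j ∧ 0 < N + j := by
  constructor
  · intro h
    by_contra! hu
    exact h.not_ge (meromorphicOrderAt_Gamma_div_Gamma_intCast_sub_nonneg hu)
  · rintro ⟨j, rfl, hj⟩
    rw [meromorphicOrderAt_Gamma_div_Gamma_intCast_sub_neg_nat hj]
    decide

theorem sub_I_mul_eq_neg_iff (a b ν : ℂ) : a - I * ν = -b ↔ ν = -I * (a + b) := by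
  constructor <;> intro h
  · linear_combination I * h + ν * I_sq
  · linear_combination -I * h + (a + b) * I_sq

theorem exists_nat_eq_neg_I_mul_iff (n : ℕ) (m : ℤ) (a ν₀ : ℂ) :
    (∃ k : ℕ, ν₀ = -I * (a + ((m : ℂ) + (|(n : ℤ) - m| : ℤ)) / 2 + k)) ↔
      ∃ j : ℕ, a + n / 2 - I * ν₀ = -j ∧ 0 < 1 - m + n + j := by
  have hshift : ((m : ℂ) + (|(n : ℤ) - m| : ℤ)) / 2 = n / 2 + (m - n).toNat := by
    have : m + |(n : ℤ) - m| = n + 2 * (m - n).toNat := by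
      rw [abs_sub_comm, Int.abs_eq_natAbs]
      omega
    rw [← Int.cast_add, this]
    push_cast
    ring
  simp only [sub_I_mul_eq_neg_iff, hshift]
  constructor
  · rintro ⟨k, hk⟩
    refine ⟨(m - n).toNat + k, ?_, by omega⟩
    rw [hk]
    push_cast
    ring
  · rintro ⟨j, hj, hpos⟩
    obtain ⟨k, rfl⟩ := Nat.exists_eq_add_of_le (show (m - n).toNat ≤ j by omega)
    refine ⟨k, ?_⟩
    rw [hj]
    push_cast
    ring

end Complex

/-- **Lemma 1.** For `n ∈ ℕ`, `m ∈ ℤ`, `x, y ∈ ℝ`, with `ᾱ = x + iy`,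
`α = x + m + iy`, the function
`ν ↦ Γ(x + iy + n/2 − iν)/Γ(1 − m − x − iy + n/2 + iν)` is meromorphic in
`ν ∈ ℂ` and its poles are exactly the points
`ν = −i(ᾱ + (m + |n − m|)/2 + k)`, `k ∈ ℕ ∪ {0}`, each pole being simple
(i.e. of order `−1`). -/
theorem stmt1 (n : ℕ) (m : ℤ) (x y : ℝ) :
    ∃ hf : ∀ ν₀ : ℂ, MeromorphicAt
        (fun ν : ℂ => Gamma ((x : ℂ) + y * I + n / 2 - I * ν) /
          Gamma (1 - m - x - y * I + n / 2 + I * ν)) ν₀,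
      ∀ ν₀ : ℂ,
        (((meromorphicOrderAt (fun ν : ℂ => Gamma ((x : ℂ) + y * I + n / 2 - I * ν) /
            Gamma (1 - m - x - y * I + n / 2 + I * ν)) ν₀) < 0) ↔
          ∃ k : ℕ, ν₀ = -I * (((x : ℂ) + y * I) + ((m : ℂ) + (|(n : ℤ) - m| : ℤ)) / 2 + k)) ∧
        ((∃ k : ℕ, ν₀ = -I * (((x : ℂ) + y * I) + ((m : ℂ) + (|(n : ℤ) - m| : ℤ)) / 2 + k)) →
          (meromorphicOrderAt (fun ν : ℂ => Gamma ((x : ℂ) + y * I + n / 2 - I * ν) /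
            Gamma (1 - m - x - y * I + n / 2 + I * ν)) ν₀) = -1) := by
  set A : ℂ := (x : ℂ) + y * I + n / 2
  set N : ℤ := 1 - m + n
  have hcomp : (fun ν : ℂ => Gamma (A - I * ν) / Gamma (1 - m - x - y * I + n / 2 + I * ν)) =
      (fun w => Gamma w / Gamma (N - w)) ∘ (fun ν => A - I * ν) := by
    ext ν
    simp only [Function.comp, A, N]
    push_cast
    ring_nf
  rw [hcomp]
  refine ⟨fun ν₀ => (meromorphic_Gamma_div_Gamma_sub _ _).comp_analyticAt (by fun_prop),
    fun ν₀ => ?_⟩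
  rw [meromorphicOrderAt_comp_of_deriv_ne_zero (by fun_prop) (by simp),
    exists_nat_eq_neg_I_mul_iff, meromorphicOrderAt_Gamma_div_Gamma_intCast_sub_lt_zero_iff]
  refine ⟨Iff.rfl, ?_⟩
  rintro ⟨j, hj, hpos⟩
  rw [hj]
  exact meromorphicOrderAt_Gamma_div_Gamma_intCast_sub_neg_nat hpos
end

section
/- Let d ≥ 1 be an integer, let α, β ∈ ℂ satisfy Re α < d/2, Re β < d/2 and Re(α + β) > d/2, and let y ∈ ℝ^d with y ≠ 0. Then the integral ∫_{ℝ^d} ‖x‖^{−2α} ‖y − x‖^{−2β} dx converges absolutely and equals π^{d/2} · (Γ(d/2 − α) Γ(d/2 − β) Γ(α + β − d/2)) / (Γ(α) Γ(β) Γ(d − α − β)) · ‖y‖^{−2(α+β−d/2)}. -/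
/-!
Schwinger parametrisation. For `Re γ > 0` and `c > 0`, `c^{-γ} = Γ(γ)⁻¹ ∫₀^∞ s^{γ-1} e^{-sc} ds`;
applied to `c = ‖x‖²` and `c = ‖y - x‖²`, and written in the coordinates `(s, r) = (t, tu)`,
this represents `Γ(α) Γ(β) ‖x‖^{-2α} ‖y - x‖^{-2β}` as the integral over `u, t > 0` of the kernel
`t^{α+β-1} u^{β-1} e^{-t‖x‖² - tu‖y - x‖²}` (a Gamma integral in `t`, then a Beta integral in
`u`). Integrating the kernel over `x` first instead gives a Gaussian integral, then a Gamma
integral in `t` and a Beta integral in `u`, which produce the right-hand side. The norm of the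
kernel is the kernel with `α, β` replaced by `Re α, Re β`, so the same computations at real
exponents give the absolute convergence that justifies Fubini.
-/

open Complex MeasureTheory Set
open scoped Real

namespace RieszChain

lemma ofReal_cpow_eq_exp {x : ℝ} (hx : 0 < x) (w : ℂ) :
    (x : ℂ) ^ w = cexp (w * Real.log x) := by
  rw [cpow_def_of_ne_zero (ofReal_ne_zero.2 hx.ne'), ofReal_log hx.le, mul_comm]

lemma ofReal_sq_cpow {r : ℝ} (hr : 0 < r) (w : ℂ) : ((r ^ 2 : ℝ) : ℂ) ^ w = (r : ℂ) ^ (2 * w) := by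
  rw [ofReal_cpow_eq_exp (by positivity), ofReal_cpow_eq_exp hr, Real.log_pow]
  congr 1
  push_cast
  ring

lemma integrable_prod_of_norm_eq {X Y : Type*} [MeasurableSpace X] [MeasurableSpace Y]
    {μ : Measure X} {ν : Measure Y} [SFinite ν] {f g : X × Y → ℂ}
    (hf : AEStronglyMeasurable f (μ.prod ν))
    (hfg : ∀ᵐ x ∂μ, ∀ᵐ y ∂ν, (‖f (x, y)‖ : ℂ) = g (x, y))
    (hf_slice : ∀ᵐ x ∂μ, Integrable (fun y ↦ f (x, y)) ν)
    (hg : Integrable (fun x ↦ ∫ y, g (x, y) ∂ν) μ) :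
    Integrable f (μ.prod ν) := by
  refine (integrable_prod_iff hf).2 ⟨hf_slice, hg.re.congr ?_⟩
  filter_upwards [hfg] with x hx
  rw [← integral_congr_ae hx, integral_complex_ofReal]
  rfl

lemma integrableOn_Ioi_cpow_mul_exp_neg_mul {a : ℂ} {r : ℝ} (ha : 0 < a.re) (hr : 0 < r) :
    IntegrableOn (fun t : ℝ ↦ (t : ℂ) ^ (a - 1) * cexp (-(r * t))) (Ioi 0) := by
  refine (integrableOn_rpow_mul_exp_neg_mul_rpow (p := 1) (by linarith : -1 < a.re - 1)
    one_pos hr).mono' (by fun_prop) ?_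
  filter_upwards [ae_restrict_mem measurableSet_Ioi] with t ht
  rw [norm_mul, norm_cpow_eq_rpow_re_of_pos ht, ← ofReal_mul, ← ofReal_neg, norm_exp_ofReal,
    Real.rpow_one, sub_re, one_re, neg_mul]

lemma integral_Ioi_cpow_mul_exp_neg_mul {a : ℂ} {r : ℝ} (ha : 0 < a.re) (hr : 0 < r) :
    ∫ t in Ioi (0 : ℝ), (t : ℂ) ^ (a - 1) * cexp (-(r * t)) = Gamma a * (r : ℂ) ^ (-a) := by
  rw [integral_cpow_mul_exp_neg_mul_Ioi ha hr, mul_comm, one_div,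
    inv_cpow _ _ (by rw [arg_ofReal_of_nonneg hr.le]; exact Real.pi_ne_zero.symm), cpow_neg]

lemma hasDerivWithinAt_div_one_sub {σ : ℝ} (hσ : σ ∈ Ioo (0 : ℝ) 1) :
    HasDerivWithinAt (fun σ : ℝ ↦ σ / (1 - σ)) ((1 - σ) ^ 2)⁻¹ (Ioo 0 1) σ := by
  have hσ' : (1 : ℝ) - σ ≠ 0 := by linarith [hσ.2]
  refine (((hasDerivAt_id' σ).div ((hasDerivAt_id' σ).const_sub 1) hσ').congr_deriv ?_)
    |>.hasDerivWithinAt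
  field_simp
  ring

lemma injOn_div_one_sub : InjOn (fun σ : ℝ ↦ σ / (1 - σ)) (Ioo 0 1) := by
  intro a ha b hb h
  have ha' : (1 : ℝ) - a ≠ 0 := by linarith [ha.2]
  have hb' : (1 : ℝ) - b ≠ 0 := by linarith [hb.2]
  field_simp at h
  linarith

lemma image_div_one_sub_Ioo : (fun σ : ℝ ↦ σ / (1 - σ)) '' Ioo 0 1 = Ioi 0 := by
  ext v
  refine ⟨?_, fun hv ↦ ⟨v / (1 + v), ?_, ?_⟩⟩
  · rintro ⟨σ, hσ, rfl⟩
    exact div_pos hσ.1 (by linarith [hσ.2])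
  · have hv : (0 : ℝ) < v := hv
    exact ⟨by positivity, (div_lt_one (by linarith)).2 (by linarith)⟩
  · have hv : (0 : ℝ) < v := hv
    field_simp
    ring

lemma abs_deriv_smul_cpow_mul_one_add_cpow {p q : ℂ} {σ : ℝ} (hσ : σ ∈ Ioo (0 : ℝ) 1) :
    |((1 - σ) ^ 2)⁻¹| •
        (((σ / (1 - σ) : ℝ) : ℂ) ^ (p - 1) * ((1 + σ / (1 - σ) : ℝ) : ℂ) ^ (-(p + q)))
      = (σ : ℂ) ^ (p - 1) * (1 - (σ : ℂ)) ^ (q - 1) := by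
  obtain ⟨hσ0, hσ1⟩ := hσ
  have hτ : (0 : ℝ) < 1 - σ := by linarith
  have h1 : (1 + σ / (1 - σ) : ℝ) = (1 - σ)⁻¹ := by field_simp; ring
  have h2 : (1 : ℂ) - σ = ((1 - σ : ℝ) : ℂ) := by push_cast; ring
  have h3 : ((1 - σ) ^ 2)⁻¹ = Real.exp (-(2 * Real.log (1 - σ))) := by
    rw [Real.exp_neg, ← Real.log_rpow hτ, Real.exp_log (by positivity), Real.rpow_two]
  rw [h1, h2, abs_of_pos (by positivity), real_smul, h3,
    ofReal_cpow_eq_exp (div_pos hσ0 hτ), ofReal_cpow_eq_exp (inv_pos.mpr hτ),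
    ofReal_cpow_eq_exp hσ0, ofReal_cpow_eq_exp hτ, Real.log_div hσ0.ne' hτ.ne', Real.log_inv,
    ofReal_exp, ← Complex.exp_add, ← Complex.exp_add, ← Complex.exp_add]
  congr 1
  push_cast
  ring

lemma integrableOn_Ioi_cpow_mul_one_add_cpow {p q : ℂ} (hp : 0 < p.re) (hq : 0 < q.re) :
    IntegrableOn (fun u : ℝ ↦ (u : ℂ) ^ (p - 1) * ((1 + u : ℝ) : ℂ) ^ (-(p + q))) (Ioi 0) := by
  rw [← image_div_one_sub_Ioo, integrableOn_image_iff_integrableOn_abs_deriv_smul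
    measurableSet_Ioo (fun _ ↦ hasDerivWithinAt_div_one_sub) injOn_div_one_sub]
  refine IntegrableOn.congr_fun ?_ (fun σ hσ ↦ (abs_deriv_smul_cpow_mul_one_add_cpow hσ).symm)
    measurableSet_Ioo
  exact (intervalIntegrable_iff_integrableOn_Ioo_of_le zero_le_one).1
    (betaIntegral_convergent hp hq)

lemma integral_Ioi_cpow_mul_one_add_cpow {p q : ℂ} (hp : 0 < p.re) (hq : 0 < q.re) :
    ∫ u in Ioi (0 : ℝ), (u : ℂ) ^ (p - 1) * ((1 + u : ℝ) : ℂ) ^ (-(p + q))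
      = Gamma p * Gamma q / Gamma (p + q) := by
  rw [← image_div_one_sub_Ioo, integral_image_eq_integral_abs_deriv_smul measurableSet_Ioo
    (fun _ ↦ hasDerivWithinAt_div_one_sub) injOn_div_one_sub,
    setIntegral_congr_fun measurableSet_Ioo (fun σ hσ ↦ abs_deriv_smul_cpow_mul_one_add_cpow hσ),
    ← integral_Ioc_eq_integral_Ioo, ← intervalIntegral.integral_of_le zero_le_one,
    ← betaIntegral, Gamma_mul_Gamma_eq_betaIntegral hp hq,
    mul_div_cancel_left₀ _ (Gamma_ne_zero_of_re_pos (by rw [add_re]; positivity))]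

lemma integral_Ioi_cpow_mul_add_mul_cpow {p q : ℂ} (hp : 0 < p.re) (hq : 0 < q.re)
    {A B : ℝ} (hA : 0 < A) (hB : 0 < B) :
    ∫ u in Ioi (0 : ℝ), (u : ℂ) ^ (p - 1) * ((A + B * u : ℝ) : ℂ) ^ (-(p + q))
      = Gamma p * Gamma q / Gamma (p + q) * (A : ℂ) ^ (-q) * (B : ℂ) ^ (-p) := by
  set c := B / A with hc_def
  have hc : 0 < c := div_pos hB hA
  have hscale : ∀ u ∈ Ioi (0 : ℝ), (u : ℂ) ^ (p - 1) * ((A + B * u : ℝ) : ℂ) ^ (-(p + q))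
      = (A : ℂ) ^ (-q) * (B : ℂ) ^ (-p) * c *
        (((c * u : ℝ) : ℂ) ^ (p - 1) * ((1 + c * u : ℝ) : ℂ) ^ (-(p + q))) := by
    intro u (hu : 0 < u)
    have hAB : A + B * u = A * (1 + c * u) := by rw [hc_def]; field_simp
    rw [hAB, ← cpow_one (c : ℂ), ofReal_cpow_eq_exp hc, ofReal_cpow_eq_exp hu,
      ofReal_cpow_eq_exp (by positivity), ofReal_cpow_eq_exp hA, ofReal_cpow_eq_exp hB,
      ofReal_cpow_eq_exp (by positivity),
      ofReal_cpow_eq_exp (by positivity), Real.log_mul hA.ne' (by positivity),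
      Real.log_mul hc.ne' hu.ne', hc_def, Real.log_div hB.ne' hA.ne']
    simp only [← Complex.exp_add]
    congr 1
    push_cast
    ring
  rw [setIntegral_congr_fun measurableSet_Ioi hscale, integral_const_mul,
    integral_comp_mul_left_Ioi (fun v ↦ (v : ℂ) ^ (p - 1) * ((1 + v : ℝ) : ℂ) ^ (-(p + q))) 0 hc,
    mul_zero, integral_Ioi_cpow_mul_one_add_cpow hp hq, real_smul, ofReal_inv]
  field_simp [ofReal_ne_zero.2 hc.ne']

section Gaussian

variable {V : Type*} [NormedAddCommGroup V] [InnerProductSpace ℝ V]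

lemma cexp_neg_mul_norm_sq_add_mul_norm_sub_sq (s r : ℂ) (y x : V) :
    cexp (-(s * ‖x‖ ^ 2 + r * ‖y - x‖ ^ 2))
      = cexp (-(r * ‖y‖ ^ 2)) * cexp (-(s + r) * ‖x‖ ^ 2 + 2 * r * (inner ℝ y x : ℝ)) := by
  rw [← Complex.exp_add, ← ofReal_pow ‖y - x‖, norm_sub_sq_real]
  congr 1
  push_cast
  ring

variable [FiniteDimensional ℝ V] [MeasurableSpace V] [BorelSpace V]

lemma integrable_cexp_neg_mul_norm_sq_add_mul_norm_sub_sq {s r : ℂ} (h : 0 < (s + r).re)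
    (y : V) : Integrable (fun x : V ↦ cexp (-(s * ‖x‖ ^ 2 + r * ‖y - x‖ ^ 2))) := by
  simp_rw [cexp_neg_mul_norm_sq_add_mul_norm_sub_sq]
  exact (GaussianFourier.integrable_cexp_neg_mul_sq_norm_add h (2 * r) y).const_mul _

lemma integral_cexp_neg_mul_norm_sq_add_mul_norm_sub_sq {s r : ℂ} (h : 0 < (s + r).re) (y : V) :
    ∫ x : V, cexp (-(s * ‖x‖ ^ 2 + r * ‖y - x‖ ^ 2))
      = (π / (s + r)) ^ (Module.finrank ℝ V / 2 : ℂ) * cexp (-(s * r / (s + r) * ‖y‖ ^ 2)) := by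
  have hsr : s + r ≠ 0 := fun h0 ↦ by simp [h0] at h
  simp_rw [cexp_neg_mul_norm_sq_add_mul_norm_sub_sq]
  rw [integral_const_mul, GaussianFourier.integral_cexp_neg_mul_sq_norm_add h, mul_left_comm,
    ← Complex.exp_add]
  congr 2
  field_simp
  ring

end Gaussian

section Schwinger

local notation "μ₊" => Measure.prod (volume.restrict (Ioi (0 : ℝ))) (volume.restrict (Ioi (0 : ℝ)))

lemma ae_fst_pos_and_snd_pos : ∀ᵐ p ∂μ₊, 0 < p.1 ∧ 0 < p.2 := by
  rw [Measure.prod_restrict]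
  exact ae_restrict_mem (measurableSet_Ioi.prod measurableSet_Ioi)

variable {V : Type*} [NormedAddCommGroup V]

noncomputable def schwingerKernel (α β : ℂ) (y : V) (p : ℝ × ℝ) (x : V) : ℂ :=
  (p.2 : ℂ) ^ (α + β - 1) * (p.1 : ℂ) ^ (β - 1) *
    cexp (-(p.2 * ‖x‖ ^ 2 + p.2 * p.1 * ‖y - x‖ ^ 2))

lemma ofReal_norm_schwingerKernel (α β : ℂ) (y : V) {p : ℝ × ℝ} (hu : 0 < p.1) (ht : 0 < p.2)
    (x : V) : (‖schwingerKernel α β y p x‖ : ℂ) = schwingerKernel α.re β.re y p x := by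
  simp only [schwingerKernel, norm_mul, norm_cpow_eq_rpow_re_of_pos hu,
    norm_cpow_eq_rpow_re_of_pos ht, Complex.norm_exp, ← ofReal_pow, ← ofReal_mul, ← ofReal_add,
    ← ofReal_neg, ofReal_re, sub_re, add_re, one_re]
  push_cast [ofReal_cpow hu.le, ofReal_cpow ht.le]
  rfl

lemma integral_schwingerKernel_eq_Gamma_mul_norm_cpow {α β : ℂ} (hα : 0 < α.re) (hβ : 0 < β.re)
    {x y : V} (hx : x ≠ 0) (hxy : x ≠ y)
    (hint : Integrable (fun p ↦ schwingerKernel α β y p x) μ₊) :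
    ∫ p, schwingerKernel α β y p x ∂μ₊
      = Gamma α * Gamma β * ((‖x‖ : ℂ) ^ (-2 * α) * (‖y - x‖ : ℂ) ^ (-2 * β)) := by
  have hA : 0 < ‖x‖ := norm_pos_iff.2 hx
  have hB : 0 < ‖y - x‖ := norm_pos_iff.2 (sub_ne_zero.2 (Ne.symm hxy))
  have inner : ∀ u ∈ Ioi (0 : ℝ), ∫ t in Ioi (0 : ℝ), schwingerKernel α β y (u, t) x
      = Gamma (α + β) *
        ((u : ℂ) ^ (β - 1) * ((‖x‖ ^ 2 + ‖y - x‖ ^ 2 * u : ℝ) : ℂ) ^ (-(β + α))) := by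
    intro u (hu : 0 < u)
    have hK : ∀ t, schwingerKernel α β y (u, t) x = (u : ℂ) ^ (β - 1) *
        ((t : ℂ) ^ (α + β - 1) * cexp (-((‖x‖ ^ 2 + ‖y - x‖ ^ 2 * u : ℝ) * t))) := by
      intro t
      simp only [schwingerKernel]
      push_cast
      ring_nf
    simp_rw [hK]
    rw [integral_const_mul, integral_Ioi_cpow_mul_exp_neg_mul (by simp; positivity)
      (by positivity), add_comm β α]
    ring
  rw [integral_prod _ hint, setIntegral_congr_fun measurableSet_Ioi inner, integral_const_mul,
    integral_Ioi_cpow_mul_add_mul_cpow hβ hα (by positivity) (by positivity),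
    ofReal_sq_cpow hA, ofReal_sq_cpow hB, add_comm β α]
  have : Gamma (α + β) ≠ 0 := Gamma_ne_zero_of_re_pos (by rw [add_re]; positivity)
  field_simp

variable [InnerProductSpace ℝ V]

local notation "n" => Module.finrank ℝ V

noncomputable def schwingerMarginal (α β : ℂ) (y : V) (p : ℝ × ℝ) : ℂ :=
  π ^ (n / 2 : ℂ) * (p.1 : ℂ) ^ (β - 1) * ((1 + p.1 : ℝ) : ℂ) ^ (-(n / 2 : ℂ)) *
    ((p.2 : ℂ) ^ (α + β - n / 2 - 1) * cexp (-((p.1 / (1 + p.1) * ‖y‖ ^ 2 : ℝ) * p.2)))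

lemma ofReal_norm_schwingerMarginal (α β : ℂ) (y : V) {p : ℝ × ℝ} (hu : 0 < p.1) (ht : 0 < p.2) :
    (‖schwingerMarginal α β y p‖ : ℂ) = schwingerMarginal α.re β.re y p := by
  have h1u : 0 < 1 + p.1 := by linarith
  simp only [schwingerMarginal, norm_mul, norm_cpow_eq_rpow_re_of_pos hu,
    norm_cpow_eq_rpow_re_of_pos ht, norm_cpow_eq_rpow_re_of_pos h1u,
    norm_cpow_eq_rpow_re_of_pos Real.pi_pos, Complex.norm_exp, ← ofReal_mul, ← ofReal_neg,
    ofReal_re, sub_re, add_re, one_re, neg_re, div_ofNat_re, natCast_re]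
  push_cast [ofReal_cpow hu.le, ofReal_cpow ht.le, ofReal_cpow h1u.le,
    ofReal_cpow Real.pi_pos.le]
  rfl

lemma integral_Ioi_schwingerMarginal {α β : ℂ} (hαβ : (n : ℝ) / 2 < (α + β).re) {y : V}
    (hy : y ≠ 0) {u : ℝ} (hu : 0 < u) :
    ∫ t in Ioi (0 : ℝ), schwingerMarginal α β y (u, t)
      = π ^ (n / 2 : ℂ) * Gamma (α + β - n / 2) * (‖y‖ : ℂ) ^ (-2 * (α + β - n / 2)) *
        ((u : ℂ) ^ ((n / 2 - α) - 1) * ((1 + u : ℝ) : ℂ) ^ (-((n / 2 - α) + (n / 2 - β)))) := by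
  have h1u : (0 : ℝ) < 1 + u := by linarith
  have hy' : 0 < ‖y‖ := norm_pos_iff.2 hy
  have hr : 0 < u / (1 + u) * ‖y‖ ^ 2 := by positivity
  simp only [schwingerMarginal]
  rw [integral_const_mul, integral_Ioi_cpow_mul_exp_neg_mul (by simp; linarith [add_re α β]) hr,
    ofReal_cpow_eq_exp hu, ofReal_cpow_eq_exp hr, ofReal_cpow_eq_exp h1u, ofReal_cpow_eq_exp hu,
    ofReal_cpow_eq_exp h1u, ofReal_cpow_eq_exp hy', Real.log_mul (by positivity) (by positivity),
    Real.log_div hu.ne' h1u.ne', Real.log_pow]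
  simp only [mul_assoc, mul_left_comm _ (Gamma _), ← Complex.exp_add]
  congr 3
  push_cast
  ring

lemma integrable_schwingerMarginal {α β : ℂ} (hα : α.re < n / 2) (hβ : β.re < n / 2)
    (hαβ : (n : ℝ) / 2 < (α + β).re) {y : V} (hy : y ≠ 0) :
    Integrable (schwingerMarginal α β y) μ₊ := by
  have hy' : 0 < ‖y‖ := norm_pos_iff.2 hy
  refine integrable_prod_of_norm_eq (g := schwingerMarginal α.re β.re y)
    (by unfold schwingerMarginal; fun_prop) ?_ ?_ ?_
  · filter_upwards [ae_restrict_mem measurableSet_Ioi] with u hu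
    filter_upwards [ae_restrict_mem measurableSet_Ioi] with t ht
    exact ofReal_norm_schwingerMarginal α β y hu ht
  · filter_upwards [ae_restrict_mem measurableSet_Ioi] with u (hu : 0 < u)
    simp only [schwingerMarginal]
    exact (integrableOn_Ioi_cpow_mul_exp_neg_mul (a := α + β - n / 2)
      (r := u / (1 + u) * ‖y‖ ^ 2) (by simp; linarith [add_re α β]) (by positivity)).const_mul _
  · refine ((integrableOn_Ioi_cpow_mul_one_add_cpow (p := n / 2 - α.re) (q := n / 2 - β.re)
      (by simpa) (by simpa)).const_mul (π ^ (n / 2 : ℂ) * Gamma (α.re + β.re - n / 2) *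
        (‖y‖ : ℂ) ^ (-2 * ((α.re : ℂ) + β.re - n / 2)))).congr ?_
    filter_upwards [ae_restrict_mem measurableSet_Ioi] with u hu
    rw [integral_Ioi_schwingerMarginal (by simpa using hαβ) hy hu]

lemma integral_schwingerMarginal {α β : ℂ} (hα : α.re < n / 2) (hβ : β.re < n / 2)
    (hαβ : (n : ℝ) / 2 < (α + β).re) {y : V} (hy : y ≠ 0) :
    ∫ p, schwingerMarginal α β y p ∂μ₊
      = π ^ (n / 2 : ℂ) * Gamma (α + β - n / 2) * (‖y‖ : ℂ) ^ (-2 * (α + β - n / 2)) *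
        (Gamma (n / 2 - α) * Gamma (n / 2 - β) / Gamma (n - α - β)) := by
  rw [integral_prod _ (integrable_schwingerMarginal hα hβ hαβ hy),
    setIntegral_congr_fun measurableSet_Ioi (fun u hu ↦ integral_Ioi_schwingerMarginal hαβ hy hu),
    integral_const_mul, integral_Ioi_cpow_mul_one_add_cpow (by simpa) (by simpa),
    show (n / 2 - α) + (n / 2 - β) = (n : ℂ) - α - β by ring]

variable [FiniteDimensional ℝ V] [MeasurableSpace V] [BorelSpace V]

lemma integral_schwingerKernel_eq_schwingerMarginal (α β : ℂ) (y : V) {p : ℝ × ℝ} (hu : 0 < p.1)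
    (ht : 0 < p.2) :
    ∫ x, schwingerKernel α β y p x = schwingerMarginal α β y p := by
  obtain ⟨u, t⟩ := p
  have h1u : (0 : ℝ) < 1 + u := by linarith [hu]
  have hπ : (π : ℂ) / (t + t * u) = ((π / (t * (1 + u)) : ℝ) : ℂ) := by push_cast; ring
  simp only [schwingerKernel, schwingerMarginal]
  rw [integral_const_mul, integral_cexp_neg_mul_norm_sq_add_mul_norm_sub_sq (by simp; positivity),
    hπ, ofReal_cpow_eq_exp ht, ofReal_cpow_eq_exp hu, ofReal_cpow_eq_exp (by positivity),
    ofReal_cpow_eq_exp Real.pi_pos, ofReal_cpow_eq_exp h1u, ofReal_cpow_eq_exp ht,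
    Real.log_div Real.pi_pos.ne' (by positivity), Real.log_mul ht.ne' h1u.ne']
  simp only [← Complex.exp_add]
  congr 1
  have : (1 + u : ℂ) ≠ 0 := by exact_mod_cast h1u.ne'
  have : (t : ℂ) ≠ 0 := by exact_mod_cast ht.ne'
  push_cast
  field_simp
  ring

lemma integrable_schwingerKernel {α β : ℂ} (hα : α.re < n / 2) (hβ : β.re < n / 2)
    (hαβ : (n : ℝ) / 2 < (α + β).re) {y : V} (hy : y ≠ 0) :
    Integrable (Function.uncurry (schwingerKernel α β y)) (μ₊.prod volume) := by
  refine integrable_prod_of_norm_eq (g := Function.uncurry (schwingerKernel α.re β.re y))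
    (by unfold Function.uncurry schwingerKernel; fun_prop) ?_ ?_ ?_
  · filter_upwards [ae_fst_pos_and_snd_pos] with p hp
    exact ae_of_all _ (ofReal_norm_schwingerKernel α β y hp.1 hp.2)
  · filter_upwards [ae_fst_pos_and_snd_pos] with p hp
    simp only [Function.uncurry_apply_pair, schwingerKernel]
    exact (integrable_cexp_neg_mul_norm_sq_add_mul_norm_sub_sq (s := p.2) (r := p.2 * p.1)
      (by simp; nlinarith [hp.1, hp.2]) y).const_mul _
  · refine (integrable_schwingerMarginal (α := α.re) (β := β.re) (by simpa) (by simpa)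
      (by simpa using hαβ) hy).congr ?_
    filter_upwards [ae_fst_pos_and_snd_pos] with p hp
    exact (integral_schwingerKernel_eq_schwingerMarginal _ _ y hp.1 hp.2).symm

theorem integrable_and_integral_norm_cpow_mul_norm_sub_cpow {α β : ℂ} (hα : α.re < n / 2)
    (hβ : β.re < n / 2) (hαβ : (n : ℝ) / 2 < (α + β).re) {y : V} (hy : y ≠ 0) :
    Integrable (fun x : V ↦ (‖x‖ : ℂ) ^ (-2 * α) * (‖y - x‖ : ℂ) ^ (-2 * β)) ∧
    ∫ x : V, (‖x‖ : ℂ) ^ (-2 * α) * (‖y - x‖ : ℂ) ^ (-2 * β)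
      = (π : ℂ) ^ ((n : ℂ) / 2) *
          (Gamma ((n : ℂ) / 2 - α) * Gamma ((n : ℂ) / 2 - β) * Gamma (α + β - (n : ℂ) / 2) /
            (Gamma α * Gamma β * Gamma ((n : ℂ) - α - β))) *
          (‖y‖ : ℂ) ^ (-2 * (α + β - (n : ℂ) / 2)) := by
  have hα0 : 0 < α.re := by linarith [add_re α β]
  have hβ0 : 0 < β.re := by linarith [add_re α β]
  have : Nontrivial V :=
    Module.nontrivial_of_finrank_pos (by exact_mod_cast (by linarith [add_re α β] : (0 : ℝ) < n))
  have hK := integrable_schwingerKernel hα hβ hαβ hy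
  have hΓ : Gamma α * Gamma β ≠ 0 :=
    mul_ne_zero (Gamma_ne_zero_of_re_pos hα0) (Gamma_ne_zero_of_re_pos hβ0)
  have hF : (fun x : V ↦ (‖x‖ : ℂ) ^ (-2 * α) * (‖y - x‖ : ℂ) ^ (-2 * β))
      =ᵐ[volume] fun x ↦ (Gamma α * Gamma β)⁻¹ * ∫ p, schwingerKernel α β y p x ∂μ₊ := by
    filter_upwards [volume.ae_ne 0, volume.ae_ne y, hK.swap.prod_right_ae] with x hx hxy hint
    rw [integral_schwingerKernel_eq_Gamma_mul_norm_cpow hα0 hβ0 hx hxy hint,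
      inv_mul_cancel_left₀ hΓ]
  refine ⟨(hK.integral_prod_right.const_mul _).congr hF.symm, ?_⟩
  have hG : (fun p ↦ ∫ x, schwingerKernel α β y p x) =ᵐ[μ₊] schwingerMarginal α β y := by
    filter_upwards [ae_fst_pos_and_snd_pos] with p hp
    exact integral_schwingerKernel_eq_schwingerMarginal α β y hp.1 hp.2
  rw [integral_congr_ae hF, integral_const_mul, ← integral_integral_swap hK,
    integral_congr_ae hG, integral_schwingerMarginal hα hβ hαβ hy]
  field_simp

end Schwinger

end RieszChain

open RieszChain

theorem stmt4_general (d : ℕ) (α β : ℂ)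
    (hα : α.re < d / 2) (hβ : β.re < d / 2) (hαβ : (d : ℝ) / 2 < (α + β).re)
    (y : EuclideanSpace ℝ (Fin d)) (hy : y ≠ 0) :
    Integrable (fun x : EuclideanSpace ℝ (Fin d) =>
        (‖x‖ : ℂ) ^ (-2 * α) * (‖y - x‖ : ℂ) ^ (-2 * β)) volume ∧
    ∫ x : EuclideanSpace ℝ (Fin d),
        (‖x‖ : ℂ) ^ (-2 * α) * (‖y - x‖ : ℂ) ^ (-2 * β)
      = (Real.pi : ℂ) ^ ((d : ℂ) / 2) *
          (Gamma ((d : ℂ) / 2 - α) * Gamma ((d : ℂ) / 2 - β) * Gamma (α + β - (d : ℂ) / 2) /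
            (Gamma α * Gamma β * Gamma ((d : ℂ) - α - β))) *
          (‖y‖ : ℂ) ^ (-2 * (α + β - (d : ℂ) / 2)) := by
  have h := integrable_and_integral_norm_cpow_mul_norm_sub_cpow
    (V := EuclideanSpace ℝ (Fin d)) (α := α) (β := β) (y := y)
  rw [finrank_euclideanSpace_fin] at h
  exact h hα hβ hαβ hy

/-- **Scalar chain relation.** For an integer `d ≥ 1`, `α, β ∈ ℂ` with
`Re α < d/2`, `Re β < d/2`, `Re(α+β) > d/2`, and `0 ≠ y ∈ ℝ^d`, the integral
`∫_{ℝ^d} ‖x‖^{−2α} ‖y−x‖^{−2β} dx` converges absolutely and equals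
`π^{d/2} · Γ(d/2−α)Γ(d/2−β)Γ(α+β−d/2) / (Γ(α)Γ(β)Γ(d−α−β)) · ‖y‖^{−2(α+β−d/2)}`. -/
theorem stmt4 (d : ℕ) (hd : 1 ≤ d) (α β : ℂ)
    (hα : α.re < d / 2) (hβ : β.re < d / 2) (hαβ : (d : ℝ) / 2 < (α + β).re)
    (y : EuclideanSpace ℝ (Fin d)) (hy : y ≠ 0) :
    Integrable (fun x : EuclideanSpace ℝ (Fin d) =>
        (‖x‖ : ℂ) ^ (-2 * α) * (‖y - x‖ : ℂ) ^ (-2 * β)) volume ∧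
    ∫ x : EuclideanSpace ℝ (Fin d),
        (‖x‖ : ℂ) ^ (-2 * α) * (‖y - x‖ : ℂ) ^ (-2 * β)
      = (Real.pi : ℂ) ^ ((d : ℂ) / 2) *
          (Gamma ((d : ℂ) / 2 - α) * Gamma ((d : ℂ) / 2 - β) * Gamma (α + β - (d : ℂ) / 2) /
            (Gamma α * Gamma β * Gamma ((d : ℂ) - α - β))) *
          (‖y‖ : ℂ) ^ (-2 * (α + β - (d : ℂ) / 2)) :=
  stmt4_general d α β hα hβ hαβ y hy
end

section
/- Let d ≥ 1 be an integer, let n, m ∈ ℕ, and let u, v ∈ ℂ^d satisfy u·u = 0 and v·v = 0. Then ∫_{ℝ^d} e^{−‖x‖²} (x·u)^n (x·v)^m dx = π^{d/2} · n! · 2^{−n} · (u·v)^n if n = m, and the integral equals 0 if n ≠ m. -/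
/-!
Write `L_w x = x·w`. Because `u·u = v·v = 0`, the Gaussian generating function collapses to
`∫ e^{-‖x‖²} e^{s L_u x + t L_v x} dx = π^{d/2} e^{(su + tv)·(su + tv)/4} = π^{d/2} e^{st (u·v)/2}`.
The Gaussian dominates the exponential of every linear form, so we may differentiate under the
integral sign: `n` derivatives in `s` at `s = 0` give
`∫ e^{-‖x‖²} L_u^n e^{t L_v} = π^{d/2} ((u·v)/2)^n tⁿ`, and `m` derivatives of this in `t` at
`t = 0` give `π^{d/2} ((u·v)/2)^n n!` if `m = n` and `0` otherwise.
-/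

open Complex MeasureTheory

namespace GaussianNullMoments

section ExpMoments

variable {E : Type*} [NormedAddCommGroup E]

theorem norm_cexp_mul_clm_le [NormedSpace ℝ E] (L : E →L[ℝ] ℂ) (z : ℂ) (x : E) :
    ‖cexp (z * L x)‖ ≤ Real.exp (‖z‖ * ‖L‖ * ‖x‖) := by
  refine (norm_exp_le_exp_norm _).trans (Real.exp_le_exp.2 ?_)
  rw [norm_mul, mul_assoc]
  gcongr
  exact L.le_opNorm x

variable [MeasurableSpace E] {μ : Measure E} {g : E → ℂ}

def HasExpMoments (μ : Measure E) (g : E → ℂ) : Prop :=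
  AEStronglyMeasurable g μ ∧
    ∀ R : ℝ, Integrable (fun x => ‖g x‖ * Real.exp (R * ‖x‖)) μ

theorem HasExpMoments.integrable (hg : HasExpMoments μ g) : Integrable g μ :=
  (hg.2 0).mono' hg.1 (ae_of_all _ fun x => by simp)

variable [NormedSpace ℝ E] [OpensMeasurableSpace E]

theorem HasExpMoments.mul_clm (hg : HasExpMoments μ g) (L : E →L[ℝ] ℂ) :
    HasExpMoments μ (fun x => g x * L x) := by
  have hm := hg.1.mul L.continuous.aestronglyMeasurable
  refine ⟨hm, fun R => ((hg.2 (R + 1)).const_mul ‖L‖).mono'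
    (hm.norm.mul (by fun_prop)) (ae_of_all _ fun x => ?_)⟩
  have hx : ‖x‖ ≤ Real.exp ‖x‖ := by linarith [Real.add_one_le_exp ‖x‖]
  calc ‖‖g x * L x‖ * Real.exp (R * ‖x‖)‖
      = ‖g x‖ * ‖L x‖ * Real.exp (R * ‖x‖) := by
        rw [Real.norm_of_nonneg (by positivity), norm_mul]
    _ ≤ ‖g x‖ * (‖L‖ * Real.exp ‖x‖) * Real.exp (R * ‖x‖) := by
        gcongr
        exact (L.le_opNorm x).trans (by gcongr)
    _ = ‖L‖ * (‖g x‖ * Real.exp ((R + 1) * ‖x‖)) := by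
        rw [add_mul, one_mul, Real.exp_add]; ring

theorem HasExpMoments.mul_cexp_clm (hg : HasExpMoments μ g) (L : E →L[ℝ] ℂ) (z : ℂ) :
    HasExpMoments μ (fun x => g x * cexp (z * L x)) := by
  have hm := hg.1.mul (by fun_prop : AEStronglyMeasurable (fun x => cexp (z * L x)) μ)
  refine ⟨hm, fun R => (hg.2 (R + ‖z‖ * ‖L‖)).mono'
    (hm.norm.mul (by fun_prop)) (ae_of_all _ fun x => ?_)⟩
  calc ‖‖g x * cexp (z * L x)‖ * Real.exp (R * ‖x‖)‖
      = ‖g x‖ * ‖cexp (z * L x)‖ * Real.exp (R * ‖x‖) := by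
        rw [Real.norm_of_nonneg (by positivity), norm_mul]
    _ ≤ ‖g x‖ * Real.exp (‖z‖ * ‖L‖ * ‖x‖) * Real.exp (R * ‖x‖) := by
        gcongr
        exact norm_cexp_mul_clm_le L z x
    _ = ‖g x‖ * Real.exp ((R + ‖z‖ * ‖L‖) * ‖x‖) := by
        rw [mul_assoc, ← Real.exp_add]; ring_nf

theorem HasExpMoments.mul_clm_pow (hg : HasExpMoments μ g) (L : E →L[ℝ] ℂ) (k : ℕ) :
    HasExpMoments μ (fun x => g x * L x ^ k) := by
  induction k with
  | zero => simpa using hg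
  | succ k ih => simpa only [pow_succ, mul_assoc] using ih.mul_clm L

theorem HasExpMoments.hasDerivAt_integral_mul_cexp (hg : HasExpMoments μ g) (L : E →L[ℝ] ℂ)
    (z₀ : ℂ) :
    HasDerivAt (fun z => ∫ x, g x * cexp (z * L x) ∂μ)
      (∫ x, g x * L x * cexp (z₀ * L x) ∂μ) z₀ := by
  have hgL := hg.mul_clm L
  refine (hasDerivAt_integral_of_dominated_loc_of_deriv_le
    (F' := fun z x => g x * L x * cexp (z * L x))
    (bound := fun x => ‖g x * L x‖ * Real.exp ((‖z₀‖ + 1) * ‖L‖ * ‖x‖))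
    (Metric.ball_mem_nhds z₀ one_pos) (.of_forall fun z => (hg.mul_cexp_clm L z).1)
    (hg.mul_cexp_clm L z₀).integrable (hgL.mul_cexp_clm L z₀).1 ?_ ?_ ?_).2
  · refine ae_of_all _ fun x z hz => ?_
    have hz : ‖z‖ ≤ ‖z₀‖ + 1 := by
      have := norm_le_norm_add_norm_sub' z z₀
      rw [← dist_eq_norm] at this
      linarith [Metric.mem_ball.1 hz]
    rw [norm_mul]
    gcongr
    refine (norm_cexp_mul_clm_le L z x).trans (by gcongr)
  · simpa only [mul_assoc] using hgL.2 ((‖z₀‖ + 1) * ‖L‖)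
  · refine ae_of_all _ fun x z _ => ?_
    simpa only [mul_assoc, mul_comm (L x)] using
      ((hasDerivAt_mul_const (L x)).cexp.const_mul (g x) : HasDerivAt _ _ z)

theorem HasExpMoments.iteratedDeriv_integral_mul_cexp (hg : HasExpMoments μ g)
    (L : E →L[ℝ] ℂ) (k : ℕ) :
    iteratedDeriv k (fun z => ∫ x, g x * cexp (z * L x) ∂μ)
      = fun z => ∫ x, g x * L x ^ k * cexp (z * L x) ∂μ := by
  induction k generalizing g with
  | zero => simp
  | succ k ih =>
    rw [iteratedDeriv_succ', funext fun z => (hg.hasDerivAt_integral_mul_cexp L z).deriv,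
      ih (hg.mul_clm L)]
    simp only [pow_succ', mul_assoc]

theorem HasExpMoments.integral_mul_pow_eq_iteratedDeriv (hg : HasExpMoments μ g)
    (L : E →L[ℝ] ℂ) (k : ℕ) :
    ∫ x, g x * L x ^ k ∂μ = iteratedDeriv k (fun z => ∫ x, g x * cexp (z * L x) ∂μ) 0 := by
  simp [hg.iteratedDeriv_integral_mul_cexp L k]

end ExpMoments

section Gaussian

theorem hasExpMoments_gaussian {V : Type*} [NormedAddCommGroup V] [InnerProductSpace ℝ V]
    [FiniteDimensional ℝ V] [MeasurableSpace V] [BorelSpace V] :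
    HasExpMoments volume (fun x : V => (Real.exp (-‖x‖ ^ 2) : ℂ)) := by
  have hint : Integrable (fun x : V => Real.exp (-(1 / 2) * ‖x‖ ^ 2)) := by
    simpa [Complex.norm_exp, ← Complex.ofReal_pow] using
      (GaussianFourier.integrable_cexp_neg_mul_sq_norm_add (V := V) (b := 1 / 2)
        (by norm_num) 0 0).norm
  refine ⟨by fun_prop, fun R => (hint.const_mul (Real.exp (R ^ 2 / 2))).mono' (by fun_prop)
    (ae_of_all _ fun x => ?_)⟩
  rw [norm_mul, norm_norm, Complex.norm_real, Real.norm_of_nonneg (Real.exp_pos _).le,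
    Real.norm_of_nonneg (Real.exp_pos _).le, ← Real.exp_add, ← Real.exp_add]
  exact Real.exp_le_exp.2 (by nlinarith [sq_nonneg (R - ‖x‖)])

variable {d : ℕ}

noncomputable def complexDot (w : Fin d → ℂ) : EuclideanSpace ℝ (Fin d) →L[ℝ] ℂ :=
  LinearMap.toContinuousLinearMap
    { toFun := fun x => ∑ i, (x i : ℂ) * w i
      map_add' := fun x y => by simp [add_mul, Finset.sum_add_distrib]
      map_smul' := fun c x => by simp [Finset.mul_sum, mul_assoc] }

@[simp]
theorem complexDot_apply (w : Fin d → ℂ) (x : EuclideanSpace ℝ (Fin d)) :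
    complexDot w x = ∑ i, (x i : ℂ) * w i :=
  rfl

theorem integral_gaussian_mul_cexp_complexDot (w : Fin d → ℂ) :
    ∫ x, (Real.exp (-‖x‖ ^ 2) : ℂ) * cexp (complexDot w x)
      = (Real.pi : ℂ) ^ ((d : ℂ) / 2) * cexp ((∑ i, w i ^ 2) / 4) := by
  rw [← (PiLp.volume_preserving_toLp (Fin d)).integral_comp
    (MeasurableEquiv.toLp 2 _).measurableEmbedding]
  convert GaussianFourier.integral_cexp_neg_mul_sum_add (b := 1) (by norm_num) w using 1
  · refine integral_congr_ae (ae_of_all _ fun x => ?_)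
    simp only [EuclideanSpace.norm_eq, Real.sq_sqrt (by positivity : 0 ≤ ∑ i, ‖x i‖ ^ 2),
      Complex.ofReal_exp, ← Complex.exp_add]
    simp [mul_comm]
  all_goals simp

theorem integral_gaussian_mul_cexp_mul_cexp {u v : Fin d → ℂ} (hu : ∑ i, u i * u i = 0)
    (hv : ∑ i, v i * v i = 0) (s t : ℂ) :
    ∫ x, (Real.exp (-‖x‖ ^ 2) : ℂ) * cexp (s * complexDot u x) * cexp (t * complexDot v x)
      = (Real.pi : ℂ) ^ ((d : ℂ) / 2) * cexp (s * t * (∑ i, u i * v i) / 2) := by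
  have hsum : ∑ i, (s * u i + t * v i) ^ 2 = 2 * s * t * ∑ i, u i * v i := by
    have hsq : ∀ i, (s * u i + t * v i) ^ 2
        = s ^ 2 * (u i * u i) + 2 * s * t * (u i * v i) + t ^ 2 * (v i * v i) := fun i => by ring
    simp only [hsq, Finset.sum_add_distrib, ← Finset.mul_sum, hu, hv]
    ring
  have hdot : ∀ x, s * complexDot u x + t * complexDot v x
      = complexDot (fun i => s * u i + t * v i) x := fun x => by
    simp only [complexDot_apply, Finset.mul_sum, ← Finset.sum_add_distrib]
    exact Finset.sum_congr rfl fun i _ => by ring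
  simp only [mul_assoc _ (cexp _), ← Complex.exp_add, hdot,
    integral_gaussian_mul_cexp_complexDot, hsum]
  ring_nf

theorem integral_gaussian_mul_pow_mul_cexp {u v : Fin d → ℂ} (hu : ∑ i, u i * u i = 0)
    (hv : ∑ i, v i * v i = 0) (n : ℕ) (t : ℂ) :
    ∫ x, (Real.exp (-‖x‖ ^ 2) : ℂ) * complexDot u x ^ n * cexp (t * complexDot v x)
      = (Real.pi : ℂ) ^ ((d : ℂ) / 2) * ((∑ i, u i * v i) / 2) ^ n * t ^ n := by
  have hg := hasExpMoments_gaussian.mul_cexp_clm (complexDot v) t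
  have hmoment := hg.integral_mul_pow_eq_iteratedDeriv (complexDot u) n
  simp only [mul_right_comm _ (cexp (t * _)),
    integral_gaussian_mul_cexp_mul_cexp hu hv] at hmoment
  have hlin : ∀ z : ℂ, z * t * (∑ i, u i * v i) / 2 = t * (∑ i, u i * v i) / 2 * z :=
    fun z => by ring
  simp only [hmoment, hlin, iteratedDeriv_const_mul_field, iteratedDeriv_cexp_const_mul,
    mul_zero, Complex.exp_zero]
  ring

theorem integral_gaussian_mul_pow_mul_pow {u v : Fin d → ℂ} (hu : ∑ i, u i * u i = 0)
    (hv : ∑ i, v i * v i = 0) (n m : ℕ) :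
    ∫ x, (Real.exp (-‖x‖ ^ 2) : ℂ) * complexDot u x ^ n * complexDot v x ^ m
      = (Real.pi : ℂ) ^ ((d : ℂ) / 2) * ((∑ i, u i * v i) / 2) ^ n
          * if m = n then (n.factorial : ℂ) else 0 := by
  have hmoment := (hasExpMoments_gaussian.mul_clm_pow (complexDot u) n
    ).integral_mul_pow_eq_iteratedDeriv (complexDot v) m
  simp only [integral_gaussian_mul_pow_mul_cexp hu hv] at hmoment
  rw [hmoment, iteratedDeriv_const_mul_field, iteratedDeriv_fun_pow_zero, Nat.cast_ite,
    Nat.cast_zero]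

end Gaussian

end GaussianNullMoments

theorem stmt5_general (d : ℕ) (n m : ℕ) (u v : Fin d → ℂ)
    (hu : ∑ i, u i * u i = 0) (hv : ∑ i, v i * v i = 0) :
    ∫ x : EuclideanSpace ℝ (Fin d),
        (Real.exp (-‖x‖ ^ 2) : ℂ) * (∑ i, (x i : ℂ) * u i) ^ n * (∑ i, (x i : ℂ) * v i) ^ m
      = if n = m then
          (Real.pi : ℂ) ^ ((d : ℂ) / 2) * (n.factorial : ℂ) * (2 : ℂ) ^ (-(n : ℤ)) *
            (∑ i, u i * v i) ^ n
        else 0 := by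
  refine (GaussianNullMoments.integral_gaussian_mul_pow_mul_pow hu hv n m).trans ?_
  obtain rfl | hnm := eq_or_ne n m
  · simp only [if_true, div_pow, zpow_neg, zpow_natCast]
    ring
  · simp [hnm, hnm.symm]

/-- **Gaussian integral with null vectors.** For integers `d ≥ 1`, `n, m ∈ ℕ`
and `u, v ∈ ℂ^d` with `u·u = 0` and `v·v = 0` (complex bilinear form),
`∫_{ℝ^d} e^{−‖x‖²}(x·u)ⁿ(x·v)ᵐ dx = π^{d/2}·n!·2^{−n}·(u·v)ⁿ` if `n = m`,
and the integral vanishes if `n ≠ m`. -/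
theorem stmt5 (d : ℕ) (hd : 1 ≤ d) (n m : ℕ) (u v : Fin d → ℂ)
    (hu : ∑ i, u i * u i = 0) (hv : ∑ i, v i * v i = 0) :
    ∫ x : EuclideanSpace ℝ (Fin d),
        (Real.exp (-‖x‖ ^ 2) : ℂ) * (∑ i, (x i : ℂ) * u i) ^ n * (∑ i, (x i : ℂ) * v i) ^ m
      = if n = m then
          (Real.pi : ℂ) ^ ((d : ℂ) / 2) * (n.factorial : ℂ) * (2 : ℂ) ^ (-(n : ℤ)) *
            (∑ i, u i * v i) ^ n
        else 0 :=
  stmt5_general d n m u v hu hv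
end

section
/- Let d ≥ 1 be an integer, let n, m ∈ ℕ, and let u, v ∈ ℂ^d satisfy u·u = 0 and v·v = 0. Then ∫_{S^{d−1}} (ω·u)^n (ω·v)^m dσ(ω) = π^{d/2} · n! / (2^{n−1} Γ(d/2 + n)) · (u·v)^n if n = m, and the integral equals 0 if n ≠ m. (The constant equals c_n/π with c_n = π^{d/2+1} n! / (2^{n−1} Γ(d/2 + n)).) -/
/-!
In polar coordinates, a function `f` homogeneous of degree `k` satisfies
`∫_{ℝ^d} f(x) e^{-|x|²} dx = Γ((d + k)/2)/2 · ∫_{S^{d-1}} f dσ`, so it suffices to compute the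
Gaussian moments `I(a, b) = ∫_{ℝ^d} (x·u)^a (x·v)^b e^{-|x|²} dx`. Gaussian integration by parts,
`2 ∫ x_i F e^{-|x|²} = ∫ ∂_i F e^{-|x|²}`, summed against `u_i`, gives
`2 I(a+1, b) = a (u·u) I(a-1, b) + b (u·v) I(a, b-1)`, and symmetrically in `v`.
When `u·u = v·v = 0` these recursions force `I(n, m) = 0` for `n ≠ m` and
`I(n, n) = n! (u·v)^n π^{d/2} / 2^n`, starting from `I(0, 0) = π^{d/2}`.
-/

open MeasureTheory Real Set Module
open scoped Nat RealInnerProductSpace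

noncomputable section

namespace SphericalOrthogonality

lemma one_add_pow_mul_exp_neg_sq_le (N : ℕ) {t : ℝ} (ht : 0 ≤ t) :
    (1 + t) ^ N * rexp (-t ^ 2) ≤ N ! * rexp (3 / 2) * rexp (-(1 / 2) * t ^ 2) := by
  have hpow : (1 + t) ^ N ≤ N ! * rexp (1 + t) := by
    have := pow_div_factorial_le_exp (1 + t) (by linarith) N
    rwa [div_le_iff₀ (by positivity), mul_comm] at this
  calc (1 + t) ^ N * rexp (-t ^ 2) ≤ N ! * rexp (1 + t) * rexp (-t ^ 2) := by gcongr
    _ = N ! * rexp (1 + t - t ^ 2) := by rw [mul_assoc, ← Real.exp_add]; ring_nf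
    _ ≤ N ! * rexp (3 / 2 - 1 / 2 * t ^ 2) := by
      gcongr ?_ * rexp ?_; nlinarith [sq_nonneg (t - 1)]
    _ = N ! * rexp (3 / 2) * rexp (-(1 / 2) * t ^ 2) := by
      rw [mul_assoc, ← Real.exp_add]; ring_nf

lemma integral_Ioi_pow_mul_exp_neg_sq (k : ℕ) :
    ∫ r in Ioi (0 : ℝ), r ^ k * rexp (-r ^ 2) = Real.Gamma ((k + 1) / 2) / 2 := by
  have h := integral_rpow_mul_exp_neg_rpow (p := 2) (q := k) two_pos
    (by linarith [(Nat.cast_nonneg k : (0 : ℝ) ≤ k)])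
  rw [one_div_mul_eq_div] at h
  rw [← h]
  refine setIntegral_congr_fun measurableSet_Ioi fun r _ => ?_
  rw [rpow_natCast, rpow_two]

lemma integral_volumeIoiPow {F : Type*} [NormedAddCommGroup F] [NormedSpace ℝ F] (n : ℕ)
    (g : ℝ → F) :
    ∫ r : Ioi (0 : ℝ), g r ∂Measure.volumeIoiPow n = ∫ r in Ioi (0 : ℝ), r ^ n • g r := by
  simp only [Measure.volumeIoiPow, ENNReal.ofReal]
  rw [integral_withDensity_eq_integral_smul (measurable_subtype_coe.pow_const _).real_toNNReal,
    integral_subtype_comap measurableSet_Ioi fun r => Real.toNNReal (r ^ n) • g r]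
  refine setIntegral_congr_fun measurableSet_Ioi fun r hr => ?_
  rw [NNReal.smul_def, Real.coe_toNNReal _ (pow_nonneg (le_of_lt hr) _)]

lemma integral_eq_integral_sphere_prod_Ioi {E F : Type*} [NormedAddCommGroup E] [NormedSpace ℝ E]
    [FiniteDimensional ℝ E] [MeasurableSpace E] [BorelSpace E] [Nontrivial E]
    [NormedAddCommGroup F] [NormedSpace ℝ F] (μ : Measure E) [μ.IsAddHaarMeasure] (f : E → F) :
    ∫ x, f x ∂μ = ∫ p : Metric.sphere (0 : E) 1 × Ioi (0 : ℝ), f ((p.2 : ℝ) • (p.1 : E))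
      ∂μ.toSphere.prod (Measure.volumeIoiPow (finrank ℝ E - 1)) := by
  calc ∫ x, f x ∂μ = ∫ x : ({0}ᶜ : Set E), f x ∂μ.comap Subtype.val := by
        rw [integral_subtype_comap (measurableSet_singleton _).compl, restrict_compl_singleton]
    _ = _ := by
      rw [← μ.measurePreserving_homeomorphUnitSphereProd.integral_comp
        (Homeomorph.measurableEmbedding _)]
      refine integral_congr_ae (ae_of_all _ fun x => ?_)
      simp only [homeomorphUnitSphereProd_apply_fst_coe, homeomorphUnitSphereProd_apply_snd_coe]
      rw [smul_inv_smul₀ (norm_ne_zero_iff.2 x.2)]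

variable {V : Type*} [NormedAddCommGroup V] [InnerProductSpace ℝ V]

lemma hasFDerivAt_exp_neg_norm_sq (x : V) :
    HasFDerivAt (fun x : V => rexp (-‖x‖ ^ 2)) ((-2 * rexp (-‖x‖ ^ 2)) • innerSL ℝ x) x := by
  refine (hasStrictFDerivAt_norm_sq x).hasFDerivAt.neg.exp.congr_fderiv ?_
  ext w
  simp only [smul_apply, neg_apply, innerSL_apply_apply, smul_eq_mul, Pi.neg_apply]
  ring

section LinearForms

variable (ℓ₁ ℓ₂ : V →L[ℝ] ℂ)

lemma apply_eq_sum_inner_mul {ι : Type*} [Fintype ι] (e : OrthonormalBasis ι ℝ V) (x : V) :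
    ℓ₁ x = ∑ i, ⟪x, e i⟫ * ℓ₁ (e i) := by
  conv_lhs => rw [← e.sum_repr' x]
  simp only [map_sum, map_smul, Complex.real_smul, real_inner_comm]

lemma norm_pow_mul_pow_le (a b : ℕ) (x : V) :
    ‖ℓ₁ x ^ a * ℓ₂ x ^ b‖ ≤ ‖ℓ₁‖ ^ a * ‖ℓ₂‖ ^ b * (1 + ‖x‖) ^ (a + b) := by
  have hx : ‖x‖ ≤ 1 + ‖x‖ := by linarith
  calc ‖ℓ₁ x ^ a * ℓ₂ x ^ b‖ = ‖ℓ₁ x‖ ^ a * ‖ℓ₂ x‖ ^ b := by rw [norm_mul, norm_pow, norm_pow]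
    _ ≤ (‖ℓ₁‖ * (1 + ‖x‖)) ^ a * (‖ℓ₂‖ * (1 + ‖x‖)) ^ b := by
      gcongr <;> exact (ContinuousLinearMap.le_opNorm _ x).trans (by gcongr)
    _ = ‖ℓ₁‖ ^ a * ‖ℓ₂‖ ^ b * (1 + ‖x‖) ^ (a + b) := by rw [mul_pow, mul_pow, pow_add]; ring

lemma hasFDerivAt_pow_mul_pow (a b : ℕ) (x : V) :
    HasFDerivAt (fun x => ℓ₁ x ^ a * ℓ₂ x ^ b)
      ((a * ℓ₁ x ^ (a - 1) * ℓ₂ x ^ b) • ℓ₁ + (b * ℓ₁ x ^ a * ℓ₂ x ^ (b - 1)) • ℓ₂) x := by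
  refine ((ℓ₁.hasFDerivAt.pow a).mul (ℓ₂.hasFDerivAt.pow b)).congr_fderiv ?_
  ext w
  simp only [add_apply, FunLike.coe_smul, Pi.smul_apply, smul_eq_mul, nsmul_eq_mul]
  ring

end LinearForms

variable [FiniteDimensional ℝ V] [MeasurableSpace V] [BorelSpace V]

lemma integrable_exp_neg_half_mul_norm_sq :
    Integrable (fun x : V => rexp (-(1 / 2) * ‖x‖ ^ 2)) := by
  have h := (GaussianFourier.integrable_cexp_neg_mul_sq_norm_add
    (show (0 : ℝ) < ((1 / 2 : ℝ) : ℂ).re by norm_num) 0 (0 : V)).norm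
  refine h.congr (ae_of_all _ fun x => ?_)
  simp only [Complex.norm_exp, zero_mul, add_zero]
  norm_cast

lemma integrable_exp_neg_norm_sq_smul_of_norm_le {F : Type*} [NormedAddCommGroup F]
    [NormedSpace ℝ F] {f : V → F} (hf : AEStronglyMeasurable f) {C : ℝ} {N : ℕ}
    (hbound : ∀ x, ‖f x‖ ≤ C * (1 + ‖x‖) ^ N) :
    Integrable (fun x => rexp (-‖x‖ ^ 2) • f x) := by
  refine ((integrable_exp_neg_half_mul_norm_sq (V := V)).const_mul (C * N ! * rexp (3 / 2))).mono'
    ((Continuous.aestronglyMeasurable (by fun_prop)).smul hf) (ae_of_all _ fun x => ?_)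
  have hC : 0 ≤ C := by simpa using (norm_nonneg _).trans (hbound 0)
  calc ‖rexp (-‖x‖ ^ 2) • f x‖ = rexp (-‖x‖ ^ 2) * ‖f x‖ := by
        rw [norm_smul, Real.norm_of_nonneg (by positivity)]
    _ ≤ rexp (-‖x‖ ^ 2) * (C * (1 + ‖x‖) ^ N) := by gcongr; exact hbound x
    _ = C * ((1 + ‖x‖) ^ N * rexp (-‖x‖ ^ 2)) := by ring
    _ ≤ C * (N ! * rexp (3 / 2) * rexp (-(1 / 2) * ‖x‖ ^ 2)) := by
        gcongr C * ?_; exact one_add_pow_mul_exp_neg_sq_le N (norm_nonneg x)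
    _ = _ := by ring

lemma two_smul_integral_inner_mul_exp_neg_norm_sq_smul {F : Type*} [NormedAddCommGroup F]
    [NormedSpace ℝ F] {f : V → F} {f' : V → V →L[ℝ] F} (hf : ∀ x, HasFDerivAt f (f' x) x)
    (w : V) (hint : Integrable fun x => rexp (-‖x‖ ^ 2) • f x)
    (hint' : Integrable fun x => rexp (-‖x‖ ^ 2) • f' x w)
    (hint_inner : Integrable fun x => (⟪x, w⟫ * rexp (-‖x‖ ^ 2)) • f x) :
    (2 : ℝ) • ∫ x, (⟪x, w⟫ * rexp (-‖x‖ ^ 2)) • f x = ∫ x, rexp (-‖x‖ ^ 2) • f' x w := by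
  have h := integral_bilinear_hasFDerivAt_right_eq_neg_left_of_integrable
    (B := ContinuousLinearMap.lsmul ℝ ℝ) (v := w) (μ := volume)
    (f := fun x : V => rexp (-‖x‖ ^ 2)) (g := f) (g' := f')
    (by
      convert hint_inner.smul (-2 : ℝ) using 1
      ext x
      simp only [ContinuousLinearMap.lsmul_apply, smul_apply, coe_innerSL_apply, Pi.smul_apply,
        smul_smul]
      ring_nf)
    (by simpa using hint') (by simpa using hint)
    (fun x _ => hasFDerivAt_exp_neg_norm_sq x) (fun x _ => hf x)
  simp only [ContinuousLinearMap.lsmul_apply, FunLike.coe_smul, Pi.smul_apply,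
    innerSL_apply_apply, smul_eq_mul] at h
  rw [h, ← integral_smul, ← integral_neg]
  congr 1 with x
  rw [smul_smul, ← neg_smul]
  ring_nf

lemma integral_exp_neg_norm_sq_smul_of_homogeneous [Nontrivial V] {F : Type*}
    [NormedAddCommGroup F] [NormedSpace ℝ F] (f : V → F) (k : ℕ)
    (hf : ∀ (r : ℝ) (x : V), 0 < r → f (r • x) = r ^ k • f x) :
    ∫ x, rexp (-‖x‖ ^ 2) • f x
      = (Real.Gamma ((finrank ℝ V + k) / 2) / 2) • ∫ ω : Metric.sphere (0 : V) 1, f ω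
          ∂(volume : Measure V).toSphere := by
  have hdim : ((finrank ℝ V - 1 + k : ℕ) : ℝ) + 1 = finrank ℝ V + k := by
    push_cast [Nat.cast_sub (finrank_pos (R := ℝ) (M := V))]
    ring
  have hprod (p : Metric.sphere (0 : V) 1 × Ioi (0 : ℝ)) :
      rexp (-‖(p.2 : ℝ) • (p.1 : V)‖ ^ 2) • f ((p.2 : ℝ) • (p.1 : V))
        = ((p.2 : ℝ) ^ k * rexp (-(p.2 : ℝ) ^ 2)) • f p.1 := by
    rw [hf _ _ p.2.2, norm_smul, norm_of_nonneg p.2.2.le, norm_eq_of_mem_sphere p.1, mul_one,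
      smul_smul, mul_comm]
  rw [integral_eq_integral_sphere_prod_Ioi volume]
  simp_rw [hprod]
  rw [← integral_prod_swap]
  simp only [Prod.fst_swap, Prod.snd_swap]
  rw [integral_prod_smul (𝕜 := ℝ) (fun r : Ioi (0 : ℝ) => (r : ℝ) ^ k * rexp (-(r : ℝ) ^ 2))
    (fun ω : Metric.sphere (0 : V) 1 => f ω),
    integral_volumeIoiPow (g := fun r => r ^ k * rexp (-r ^ 2))]
  simp only [smul_eq_mul, ← mul_assoc, ← pow_add]
  rw [integral_Ioi_pow_mul_exp_neg_sq, hdim]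

section Moments

variable (ℓ₁ ℓ₂ : V →L[ℝ] ℂ)

def gaussianMoment (a b : ℕ) : ℂ := ∫ x, rexp (-‖x‖ ^ 2) • (ℓ₁ x ^ a * ℓ₂ x ^ b)

lemma gaussianMoment_comm (a b : ℕ) : gaussianMoment ℓ₁ ℓ₂ a b = gaussianMoment ℓ₂ ℓ₁ b a := by
  simp only [gaussianMoment, mul_comm]

lemma integrable_exp_neg_norm_sq_smul_pow_mul_pow (a b : ℕ) :
    Integrable fun x => rexp (-‖x‖ ^ 2) • (ℓ₁ x ^ a * ℓ₂ x ^ b) :=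
  integrable_exp_neg_norm_sq_smul_of_norm_le (Continuous.aestronglyMeasurable (by fun_prop))
    (norm_pow_mul_pow_le ℓ₁ ℓ₂ a b)

lemma integrable_inner_mul_exp_neg_norm_sq_smul_pow_mul_pow (w : V) (a b : ℕ) :
    Integrable fun x => (⟪x, w⟫ * rexp (-‖x‖ ^ 2)) • (ℓ₁ x ^ a * ℓ₂ x ^ b) := by
  have hbound (x : V) : ‖⟪x, w⟫ • (ℓ₁ x ^ a * ℓ₂ x ^ b)‖
      ≤ ‖w‖ * ‖ℓ₁‖ ^ a * ‖ℓ₂‖ ^ b * (1 + ‖x‖) ^ (a + b + 1) := by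
    have hinner : ‖⟪x, w⟫‖ ≤ ‖w‖ * (1 + ‖x‖) := by
      rw [mul_comm]; exact (norm_inner_le_norm x w).trans (by gcongr; linarith)
    rw [norm_smul, pow_succ]
    calc ‖⟪x, w⟫‖ * ‖ℓ₁ x ^ a * ℓ₂ x ^ b‖
        ≤ ‖w‖ * (1 + ‖x‖) * (‖ℓ₁‖ ^ a * ‖ℓ₂‖ ^ b * (1 + ‖x‖) ^ (a + b)) := by
          gcongr; exact norm_pow_mul_pow_le ℓ₁ ℓ₂ a b x
      _ = _ := by ring
  refine (integrable_exp_neg_norm_sq_smul_of_norm_le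
    (Continuous.aestronglyMeasurable (by fun_prop)) hbound).congr (ae_of_all _ fun x => ?_)
  simp only [smul_smul, mul_comm]

lemma two_mul_integral_inner_mul_exp_neg_norm_sq_smul_pow_mul_pow (w : V) (a b : ℕ) :
    2 * ∫ x, (⟪x, w⟫ * rexp (-‖x‖ ^ 2)) • (ℓ₁ x ^ a * ℓ₂ x ^ b)
      = a * ℓ₁ w * gaussianMoment ℓ₁ ℓ₂ (a - 1) b + b * ℓ₂ w * gaussianMoment ℓ₁ ℓ₂ a (b - 1) := by
  have hint₁ := (integrable_exp_neg_norm_sq_smul_pow_mul_pow ℓ₁ ℓ₂ (a - 1) b).const_mul (a * ℓ₁ w)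
  have hint₂ := (integrable_exp_neg_norm_sq_smul_pow_mul_pow ℓ₁ ℓ₂ a (b - 1)).const_mul (b * ℓ₂ w)
  have hsplit : (fun x => rexp (-‖x‖ ^ 2) •
      ((a * ℓ₁ x ^ (a - 1) * ℓ₂ x ^ b) • ℓ₁ + (b * ℓ₁ x ^ a * ℓ₂ x ^ (b - 1)) • ℓ₂) w)
      = fun x => a * ℓ₁ w * (rexp (-‖x‖ ^ 2) • (ℓ₁ x ^ (a - 1) * ℓ₂ x ^ b))
        + b * ℓ₂ w * (rexp (-‖x‖ ^ 2) • (ℓ₁ x ^ a * ℓ₂ x ^ (b - 1))) := by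
    ext x
    simp only [add_apply, FunLike.coe_smul, Pi.smul_apply, smul_eq_mul, Complex.real_smul]
    ring
  have h := two_smul_integral_inner_mul_exp_neg_norm_sq_smul (hasFDerivAt_pow_mul_pow ℓ₁ ℓ₂ a b) w
    (integrable_exp_neg_norm_sq_smul_pow_mul_pow ℓ₁ ℓ₂ a b) (hsplit ▸ hint₁.add hint₂)
    (integrable_inner_mul_exp_neg_norm_sq_smul_pow_mul_pow ℓ₁ ℓ₂ w a b)
  rw [← Complex.ofReal_ofNat, ← Complex.real_smul, h, hsplit, integral_add hint₁ hint₂,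
    integral_const_mul, integral_const_mul, gaussianMoment, gaussianMoment]

lemma two_mul_gaussianMoment_succ_left {ι : Type*} [Fintype ι] (e : OrthonormalBasis ι ℝ V)
    (a b : ℕ) :
    2 * gaussianMoment ℓ₁ ℓ₂ (a + 1) b
      = a * (∑ i, ℓ₁ (e i) ^ 2) * gaussianMoment ℓ₁ ℓ₂ (a - 1) b
        + b * (∑ i, ℓ₁ (e i) * ℓ₂ (e i)) * gaussianMoment ℓ₁ ℓ₂ a (b - 1) := by
  have hexpand (x : V) : rexp (-‖x‖ ^ 2) • (ℓ₁ x ^ (a + 1) * ℓ₂ x ^ b)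
      = ∑ i, ℓ₁ (e i) * ((⟪x, e i⟫ * rexp (-‖x‖ ^ 2)) • (ℓ₁ x ^ a * ℓ₂ x ^ b)) := by
    simp only [Complex.real_smul, pow_succ, apply_eq_sum_inner_mul ℓ₁ e x, Finset.mul_sum,
      Finset.sum_mul]
    push_cast
    exact Finset.sum_congr rfl fun i _ => by ring
  have hint (i : ι) :=
    (integrable_inner_mul_exp_neg_norm_sq_smul_pow_mul_pow ℓ₁ ℓ₂ (e i) a b).const_mul (ℓ₁ (e i))
  rw [gaussianMoment, integral_congr_ae (ae_of_all _ hexpand),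
    integral_finsetSum _ fun i _ => hint i, Finset.mul_sum, Finset.mul_sum, Finset.mul_sum,
    Finset.sum_mul, Finset.sum_mul, ← Finset.sum_add_distrib]
  refine Finset.sum_congr rfl fun i _ => ?_
  rw [integral_const_mul, mul_left_comm,
    two_mul_integral_inner_mul_exp_neg_norm_sq_smul_pow_mul_pow]
  ring

lemma gaussianMoment_zero_zero :
    gaussianMoment ℓ₁ ℓ₂ 0 0 = (π : ℂ) ^ ((finrank ℝ V : ℂ) / 2) := by
  have h := GaussianFourier.integral_cexp_neg_mul_sq_norm (V := V) (b := 1) (by simp)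
  simp only [neg_mul, one_mul, div_one] at h
  rw [← h, gaussianMoment]
  refine integral_congr_ae (ae_of_all _ fun x => ?_)
  simp [Complex.real_smul, Complex.ofReal_exp]

lemma two_mul_gaussianMoment_succ_left_of_isotropic {ι : Type*} [Fintype ι]
    (e : OrthonormalBasis ι ℝ V) (h₁ : ∑ i, ℓ₁ (e i) ^ 2 = 0) (a b : ℕ) :
    2 * gaussianMoment ℓ₁ ℓ₂ (a + 1) b
      = b * (∑ i, ℓ₁ (e i) * ℓ₂ (e i)) * gaussianMoment ℓ₁ ℓ₂ a (b - 1) := by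
  rw [two_mul_gaussianMoment_succ_left ℓ₁ ℓ₂ e, h₁]
  ring

lemma two_mul_gaussianMoment_succ_right_of_isotropic {ι : Type*} [Fintype ι]
    (e : OrthonormalBasis ι ℝ V) (h₂ : ∑ i, ℓ₂ (e i) ^ 2 = 0) (a b : ℕ) :
    2 * gaussianMoment ℓ₁ ℓ₂ a (b + 1)
      = a * (∑ i, ℓ₁ (e i) * ℓ₂ (e i)) * gaussianMoment ℓ₁ ℓ₂ (a - 1) b := by
  rw [gaussianMoment_comm, two_mul_gaussianMoment_succ_left_of_isotropic ℓ₂ ℓ₁ e h₂,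
    gaussianMoment_comm]
  simp only [mul_comm (ℓ₂ _)]

lemma gaussianMoment_of_isotropic {ι : Type*} [Fintype ι] (e : OrthonormalBasis ι ℝ V)
    (h₁ : ∑ i, ℓ₁ (e i) ^ 2 = 0) (h₂ : ∑ i, ℓ₂ (e i) ^ 2 = 0) (n m : ℕ) :
    gaussianMoment ℓ₁ ℓ₂ n m = if n = m then
      n ! / 2 ^ n * (∑ i, ℓ₁ (e i) * ℓ₂ (e i)) ^ n * (π : ℂ) ^ ((finrank ℝ V : ℂ) / 2)
      else 0 := by
  induction n generalizing m with
  | zero =>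
    rcases m with _ | m
    · simp [gaussianMoment_zero_zero]
    · simpa using two_mul_gaussianMoment_succ_right_of_isotropic ℓ₁ ℓ₂ e h₂ 0 m
  | succ n ih =>
    rcases m with _ | m
    · simpa using two_mul_gaussianMoment_succ_left_of_isotropic ℓ₁ ℓ₂ e h₁ n 0
    · have h := two_mul_gaussianMoment_succ_left_of_isotropic ℓ₁ ℓ₂ e h₁ n (m + 1)
      rw [Nat.add_sub_cancel, ih m] at h
      rw [if_congr Nat.succ_inj rfl rfl]
      split_ifs at h ⊢ with hnm
      · subst hnm
        rw [← mul_right_inj' (two_ne_zero' ℂ), h]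
        push_cast [Nat.factorial_succ, pow_succ]
        field_simp
      · simpa using h

end Moments

lemma integral_sphere_pow_mul_pow_of_isotropic [Nontrivial V] (ℓ₁ ℓ₂ : V →L[ℝ] ℂ) {ι : Type*}
    [Fintype ι] (e : OrthonormalBasis ι ℝ V) (h₁ : ∑ i, ℓ₁ (e i) ^ 2 = 0)
    (h₂ : ∑ i, ℓ₂ (e i) ^ 2 = 0) (n m : ℕ) :
    ∫ ω : Metric.sphere (0 : V) 1, ℓ₁ ω ^ n * ℓ₂ ω ^ m ∂(volume : Measure V).toSphere
      = if n = m then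
          (π : ℂ) ^ ((finrank ℝ V : ℂ) / 2) * n ! /
              (2 ^ ((n : ℤ) - 1) * Complex.Gamma ((finrank ℝ V : ℂ) / 2 + n)) *
            (∑ i, ℓ₁ (e i) * ℓ₂ (e i)) ^ n
        else 0 := by
  have hpolar : gaussianMoment ℓ₁ ℓ₂ n m = _ :=
    integral_exp_neg_norm_sq_smul_of_homogeneous (fun x => ℓ₁ x ^ n * ℓ₂ x ^ m) (n + m)
      fun r x _ => by simp only [map_smul, Complex.real_smul]; push_cast; ring
  have hΓ : 0 < Real.Gamma ((finrank ℝ V + (n + m : ℕ)) / 2) := by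
    have : (0 : ℝ) < finrank ℝ V := Nat.cast_pos.2 finrank_pos
    exact Real.Gamma_pos_of_pos (by positivity)
  rw [gaussianMoment_of_isotropic ℓ₁ ℓ₂ e h₁ h₂, Complex.real_smul] at hpolar
  split_ifs at hpolar ⊢ with hnm
  · subst hnm
    have hΓc : Complex.Gamma ((finrank ℝ V : ℂ) / 2 + n)
        = (Real.Gamma ((finrank ℝ V + (n + n : ℕ)) / 2) : ℂ) := by
      rw [← Complex.Gamma_ofReal]; push_cast; ring_nf
    have hΓne : (Real.Gamma ((finrank ℝ V + (n + n : ℕ)) / 2) : ℂ) ≠ 0 := by exact_mod_cast hΓ.ne'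
    rw [zpow_sub₀ two_ne_zero, zpow_natCast, zpow_one, hΓc]
    rw [Complex.ofReal_div, Complex.ofReal_ofNat] at hpolar
    field_simp at hpolar ⊢
    linear_combination -hpolar
  · have hΓne : ((Real.Gamma ((finrank ℝ V + (n + m : ℕ)) / 2) / 2 : ℝ) : ℂ) ≠ 0 := by
      exact_mod_cast (half_pos hΓ).ne'
    exact (mul_eq_zero.1 hpolar.symm).resolve_left hΓne

def dotCLM {ι : Type*} [Fintype ι] (u : ι → ℂ) : EuclideanSpace ℝ ι →L[ℝ] ℂ :=
  ∑ i, (EuclideanSpace.proj i).smulRight (u i)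

lemma dotCLM_apply {ι : Type*} [Fintype ι] (u : ι → ℂ) (x : EuclideanSpace ℝ ι) :
    dotCLM u x = ∑ i, (x i : ℂ) * u i := by
  simp [dotCLM, Complex.real_smul]

lemma dotCLM_basisFun {ι : Type*} [Fintype ι] [DecidableEq ι] (u : ι → ℂ) (i : ι) :
    dotCLM u (EuclideanSpace.basisFun ι ℝ i) = u i := by
  simp [dotCLM_apply, PiLp.single_apply, apply_ite (fun r : ℝ => (r : ℂ))]

end SphericalOrthogonality

end

open SphericalOrthogonality

open Complex MeasureTheory

/-- **Spherical orthogonality relation.** For integers `d ≥ 1`, `n, m ∈ ℕ` and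
`u, v ∈ ℂ^d` with `u·u = 0`, `v·v = 0` (complex bilinear form), the integral
over the unit sphere `S^{d−1} ⊂ ℝ^d` (with surface measure, total mass
`2π^{d/2}/Γ(d/2)`, realized as `volume.toSphere`) satisfies
`∫_{S^{d−1}} (ω·u)ⁿ(ω·v)ᵐ dσ(ω) = π^{d/2}·n!/(2^{n−1}Γ(d/2+n))·(u·v)ⁿ` if
`n = m`, and vanishes if `n ≠ m`.  The constant is `cₙ/π` with
`cₙ = π^{d/2+1} n! / (2^{n−1} Γ(d/2+n))`. -/
theorem stmt6 (d : ℕ) (hd : 1 ≤ d) (n m : ℕ) (u v : Fin d → ℂ)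
    (hu : ∑ i, u i * u i = 0) (hv : ∑ i, v i * v i = 0) :
    ∫ ω : Metric.sphere (0 : EuclideanSpace ℝ (Fin d)) 1,
        (∑ i, ((ω : EuclideanSpace ℝ (Fin d)) i : ℂ) * u i) ^ n *
          (∑ i, ((ω : EuclideanSpace ℝ (Fin d)) i : ℂ) * v i) ^ m
        ∂((volume : Measure (EuclideanSpace ℝ (Fin d))).toSphere)
      = if n = m then
          (Real.pi : ℂ) ^ ((d : ℂ) / 2) * (n.factorial : ℂ) /
              ((2 : ℂ) ^ ((n : ℤ) - 1) * Gamma ((d : ℂ) / 2 + n)) *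
            (∑ i, u i * v i) ^ n
        else 0 := by
  have : Nonempty (Fin d) := ⟨⟨0, hd⟩⟩
  have key := integral_sphere_pow_mul_pow_of_isotropic
    (dotCLM u) (dotCLM v)
    (EuclideanSpace.basisFun (Fin d) ℝ) (by simpa only [dotCLM_basisFun, sq] using hu)
    (by simpa only [dotCLM_basisFun, sq] using hv) n m
  simp only [dotCLM_basisFun] at key
  simpa only [dotCLM_apply, finrank_euclideanSpace_fin] using key
end

section
/- Let d ≥ 3 be an integer, n ∈ ℕ, and for 0 ≤ p ≤ ⌊n/2⌋ set a_p = n! (−1)^p Γ(n − p + d/2 − 1) / (2^{2p} p! (n − 2p)! Γ(n + d/2 − 1)). Then for every fixed v ∈ ℝ^d, the polynomial function P : ℝ^d → ℝ defined by P(u) = ∑_{p=0}^{⌊n/2⌋} a_p (u·v)^{n−2p} (u·u)^p (v·v)^p is harmonic in u, i.e. Δ_u P = ∑_{i=1}^d ∂²P/∂u_i² = 0 on ℝ^d. (In particular a₀ = 1 and the a_p satisfy the recurrence a_p = −a_{p−1} (n − 2p + 2)(n − 2p + 1) / (2p(d + 2n − 2 − 2p)).) -/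
/-!
Write `X = ⟪v, u⟫`, `Q = ⟪u, u⟫`, `V = ⟪v, v⟫`. Since `∇X = v` and `∇Q = 2u`, the Laplacian
of `X ^ m * Q ^ p` is `m (m - 1) V X ^ (m - 2) Q ^ p + 2p (2m + 2p - 2 + d) X ^ m Q ^ (p - 1)`.
Applied to `P`, the first term of index `p` and the second term of index `p + 1` are both
multiples of `X ^ (n - 2p - 2) Q ^ p`, and they cancel precisely when `a (p + 1) / a p` is the
stated ratio, which follows from `Γ (x + 1) = x Γ x`. The sum therefore telescopes to its two end
terms, which vanish because `m (m - 1) = 0` for `m ≤ 1` and the second term carries the factor `p`.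
-/

open RealInnerProductSpace

theorem natCast_mul_pow_sub_one_mul {R : Type*} [CommSemiring R] (k : ℕ) (x : R) :
    (k : R) * (x ^ (k - 1) * x) = k * x ^ k := by
  rcases Nat.eq_zero_or_pos k with rfl | hk
  · simp
  · rw [pow_sub_one_mul hk.ne']

theorem natCast_mul_natCast_sub_one {R : Type*} [Ring R] (k : ℕ) :
    (k : R) * ((k - 1 : ℕ) : R) = k * (k - 1) := by
  rcases Nat.eq_zero_or_pos k with rfl | hk
  · simp
  · rw [Nat.cast_sub hk, Nat.cast_one]

theorem natCast_mul_sub_one_mul_pow_sub_two_mul {R : Type*} [CommRing R] (k : ℕ) (x : R) :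
    (k : R) * (k - 1) * (x ^ (k - 2) * x) = k * (k - 1) * x ^ (k - 1) := by
  rcases k with _ | _ | k
  · simp
  · simp
  · simp [pow_succ]

theorem OrthonormalBasis.sum_inner_self {ι E : Type*} [Fintype ι] [NormedAddCommGroup E]
    [InnerProductSpace ℝ E] (b : OrthonormalBasis ι ℝ E) :
    ∑ i, ⟪b i, b i⟫ = Fintype.card ι := by
  simp [b.norm_eq_one]

theorem sum_range_succ_add_eq_zero {M : Type*} [AddCommMonoid M] {A B : ℕ → M} {N : ℕ}
    (hA : A N = 0) (hB : B 0 = 0) (h : ∀ p < N, A p + B (p + 1) = 0) :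
    ∑ p ∈ Finset.range (N + 1), (A p + B p) = 0 := by
  rw [Finset.sum_add_distrib, Finset.sum_range_succ, Finset.sum_range_succ' B, hA, hB, add_zero,
    add_zero, ← Finset.sum_add_distrib]
  exact Finset.sum_eq_zero fun p hp => h p (Finset.mem_range.1 hp)

theorem EuclideanSpace.sum_mul_eq_inner {ι : Type*} [Fintype ι] (x y : EuclideanSpace ℝ ι) :
    ∑ i, x i * y i = ⟪x, y⟫ := by
  simp [PiLp.inner_apply, mul_comm]

noncomputable def projCoeff (d n p : ℕ) : ℝ :=
  (n.factorial : ℝ) * (-1 : ℝ) ^ p * Real.Gamma ((n : ℝ) - p + d / 2 - 1) /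
    (2 ^ (2 * p) * (p.factorial : ℝ) * ((n - 2 * p).factorial : ℝ) *
      Real.Gamma ((n : ℝ) + d / 2 - 1))

theorem projCoeff_zero {d n : ℕ} (h : 0 < (n : ℝ) + d / 2 - 1) : projCoeff d n 0 = 1 := by
  have hΓ := (Real.Gamma_pos_of_pos h).ne'
  simp [projCoeff, hΓ, Nat.factorial_ne_zero]

theorem projCoeff_succ {d n p : ℕ} (hd : 0 < d) (hp : 2 * (p + 1) ≤ n) :
    2 * (p + 1) * ((d : ℝ) + 2 * n - 4 - 2 * p) * projCoeff d n (p + 1) =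
      -(((n : ℝ) - 2 * p) * ((n : ℝ) - 2 * p - 1)) * projCoeff d n p := by
  have hnr : 2 * ((p : ℝ) + 1) ≤ n := by exact_mod_cast hp
  have hdr : (0 : ℝ) < d := by exact_mod_cast hd
  set x : ℝ := (n : ℝ) - (p + 1 : ℕ) + d / 2 - 1 with hx
  have hx0 : x ≠ 0 := by push_cast [hx]; linarith
  have hΓ : Real.Gamma ((n : ℝ) - p + d / 2 - 1) = x * Real.Gamma x := by
    rw [← Real.Gamma_add_one hx0, hx]
    push_cast
    ring_nf
  have hfact : ((n - 2 * p).factorial : ℝ) =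
      ((n : ℝ) - 2 * p) * ((n : ℝ) - 2 * p - 1) * (n - 2 * (p + 1)).factorial := by
    rw [show n - 2 * p = n - 2 * (p + 1) + 1 + 1 by omega, Nat.factorial_succ, Nat.factorial_succ]
    push_cast [Nat.cast_sub hp]
    ring
  have h1 : (n : ℝ) - 2 * p ≠ 0 := by linarith
  have h2 : (n : ℝ) - 2 * p - 1 ≠ 0 := by linarith
  simp only [projCoeff, hΓ, hfact, Nat.factorial_succ, pow_succ, hx]
  push_cast
  field_simp
  ring

theorem projCoeff_eq_neg_mul_div {d n p : ℕ} (hd : 0 < d) (hp1 : 1 ≤ p) (hp : 2 * p ≤ n) :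
    projCoeff d n p = -projCoeff d n (p - 1) * (((n : ℝ) - 2 * p + 2) * ((n : ℝ) - 2 * p + 1)) /
      (2 * p * ((d : ℝ) + 2 * n - 2 - 2 * p)) := by
  obtain ⟨q, rfl⟩ : ∃ q, p = q + 1 := ⟨p - 1, by omega⟩
  have hrec := projCoeff_succ hd hp
  have hnr : 2 * ((q : ℝ) + 1) ≤ n := by exact_mod_cast hp
  have hdr : (0 : ℝ) < d := by exact_mod_cast hd
  have hden : 2 * ((q + 1 : ℕ) : ℝ) * ((d : ℝ) + 2 * n - 2 - 2 * (q + 1 : ℕ)) ≠ 0 := by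
    push_cast; nlinarith
  rw [Nat.add_sub_cancel, eq_div_iff hden]
  push_cast
  linear_combination hrec

section InnerMonomial

variable {E : Type*} [NormedAddCommGroup E] [InnerProductSpace ℝ E]

def innerMonomial (v : E) (m p : ℕ) (w : E) : ℝ := ⟪v, w⟫ ^ m * ⟪w, w⟫ ^ p

theorem contDiff_innerMonomial (v : E) (m p : ℕ) {k : WithTop ℕ∞} :
    ContDiff ℝ k (innerMonomial v m p) :=
  ((contDiff_const.inner ℝ contDiff_id).pow m).mul ((contDiff_id.inner ℝ contDiff_id).pow p)

theorem hasFDerivAt_innerMonomial (v u : E) (m p : ℕ) :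
    HasFDerivAt (innerMonomial v m p)
      ((m * innerMonomial v (m - 1) p u) • innerSL ℝ v
        + (2 * p * innerMonomial v m (p - 1) u) • innerSL ℝ u) u := by
  have hX : HasFDerivAt (fun w : E => ⟪v, w⟫) (innerSL ℝ v) u := (innerSL ℝ v).hasFDerivAt
  have hQ : HasFDerivAt (fun w : E => ⟪w, w⟫) ((2 : ℝ) • innerSL ℝ u) u := by
    refine ((hasFDerivAt_id u).inner ℝ (hasFDerivAt_id u)).congr_fderiv ?_
    ext e
    simp [real_inner_comm, two_smul]
  refine ((hX.pow m).mul (hQ.pow p)).congr_fderiv ?_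
  ext e
  simp only [add_apply, smul_apply, innerSL_apply_apply, smul_eq_mul, nsmul_eq_mul, innerMonomial]
  ring

theorem fderiv_innerMonomial_apply (v w e : E) (m p : ℕ) :
    fderiv ℝ (innerMonomial v m p) w e =
      m * ⟪v, e⟫ * innerMonomial v (m - 1) p w
        + 2 * p * (innerMonomial v m (p - 1) w * ⟪w, e⟫) := by
  rw [(hasFDerivAt_innerMonomial v w m p).fderiv]
  simp only [add_apply, smul_apply, innerSL_apply_apply, smul_eq_mul]
  ring

end InnerMonomial

section BasisLaplacian

variable {E ι : Type*} [NormedAddCommGroup E] [InnerProductSpace ℝ E] [Fintype ι]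

theorem ContDiff.differentiable_fderiv_apply {f : E → ℝ} (hf : ContDiff ℝ 2 f) (e : E) :
    Differentiable ℝ fun w => fderiv ℝ f w e :=
  ((hf.fderiv_right (m := 1) le_rfl).clm_apply contDiff_const).differentiable one_ne_zero

-- For `EuclideanSpace.basisFun` this is the coordinate Laplacian `∑ᵢ ∂²/∂uᵢ²` of the statement.
noncomputable def basisLaplacian (b : OrthonormalBasis ι ℝ E) (f : E → ℝ) (u : E) : ℝ :=
  ∑ i, fderiv ℝ (fun w => fderiv ℝ f w (b i)) u (b i)

variable (b : OrthonormalBasis ι ℝ E)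

theorem basisLaplacian_sum {α : Type*} (s : Finset α) {f : α → E → ℝ}
    (hf : ∀ k ∈ s, ContDiff ℝ 2 (f k)) (u : E) :
    basisLaplacian b (fun w => ∑ k ∈ s, f k w) u = ∑ k ∈ s, basisLaplacian b (f k) u := by
  have hD : ∀ w, fderiv ℝ (fun w => ∑ k ∈ s, f k w) w = ∑ k ∈ s, fderiv ℝ (f k) w :=
    fun w => fderiv_fun_sum fun k hk => ((hf k hk).differentiable two_ne_zero).differentiableAt
  simp only [basisLaplacian, hD, sum_apply]
  rw [Finset.sum_comm]
  refine Finset.sum_congr rfl fun i _ => ?_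
  rw [fderiv_fun_sum fun k hk => ((hf k hk).differentiable_fderiv_apply _).differentiableAt,
    sum_apply]

theorem basisLaplacian_const_mul (c : ℝ) {f : E → ℝ} (hf : ContDiff ℝ 2 f) (u : E) :
    basisLaplacian b (fun w => c * f w) u = c * basisLaplacian b f u := by
  have hD : ∀ w, fderiv ℝ (fun w => c * f w) w = c • fderiv ℝ f w := fun w =>
    fderiv_const_mul ((hf.differentiable two_ne_zero).differentiableAt) c
  simp only [basisLaplacian, hD, smul_apply, smul_eq_mul, Finset.mul_sum]
  refine Finset.sum_congr rfl fun i _ => ?_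
  rw [fderiv_const_mul (hf.differentiable_fderiv_apply _).differentiableAt,
    smul_apply, smul_eq_mul]

theorem basisLaplacian_innerMonomial (v u : E) (m p : ℕ) :
    basisLaplacian b (innerMonomial v m p) u =
      m * (m - 1) * ⟪v, v⟫ * innerMonomial v (m - 2) p u
        + 2 * p * (2 * m + 2 * p - 2 + Fintype.card ι) * innerMonomial v m (p - 1) u := by
  have hsecond : ∀ e : E, fderiv ℝ (fun w => fderiv ℝ (innerMonomial v m p) w e) u e =
      m * (m - 1) * innerMonomial v (m - 2) p u * (⟪v, e⟫ * ⟪v, e⟫)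
        + 4 * m * p * innerMonomial v (m - 1) (p - 1) u * (⟪v, e⟫ * ⟪u, e⟫)
        + 4 * p * (p - 1) * innerMonomial v m (p - 2) u * (⟪u, e⟫ * ⟪u, e⟫)
        + 2 * p * innerMonomial v m (p - 1) u * ⟪e, e⟫ := by
    intro e
    have hL : HasFDerivAt (fun w : E => ⟪w, e⟫) (innerSL ℝ e) u :=
      (innerSL ℝ e).hasFDerivAt.congr_of_eventuallyEq
        (Filter.Eventually.of_forall fun w => real_inner_comm e w)
    have hD := ((hasFDerivAt_innerMonomial v u (m - 1) p).const_mul (m * ⟪v, e⟫)).fun_add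
      (((hasFDerivAt_innerMonomial v u m (p - 1)).fun_mul hL).const_mul (2 * p))
    simp only [fderiv_innerMonomial_apply]
    rw [hD.fderiv]
    simp only [add_apply, smul_apply, innerSL_apply_apply, smul_eq_mul, Nat.sub_sub,
      Nat.reduceAdd]
    linear_combination
      ⟪v, e⟫ * ⟪v, e⟫ * innerMonomial v (m - 2) p u * natCast_mul_natCast_sub_one (R := ℝ) m
        + 4 * ⟪u, e⟫ * ⟪u, e⟫ * innerMonomial v m (p - 2) u
          * natCast_mul_natCast_sub_one (R := ℝ) p
  have hX : (m : ℝ) * (innerMonomial v (m - 1) (p - 1) u * ⟪v, u⟫) =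
      m * innerMonomial v m (p - 1) u := by
    unfold innerMonomial
    linear_combination ⟪u, u⟫ ^ (p - 1) * natCast_mul_pow_sub_one_mul m ⟪v, u⟫
  have hQ : (p : ℝ) * (p - 1) * (innerMonomial v m (p - 2) u * ⟪u, u⟫) =
      p * (p - 1) * innerMonomial v m (p - 1) u := by
    unfold innerMonomial
    linear_combination ⟪v, u⟫ ^ m * natCast_mul_sub_one_mul_pow_sub_two_mul p ⟪u, u⟫
  have hsum : ∀ x y : E, ∑ i, ⟪x, b i⟫ * ⟪y, b i⟫ = ⟪x, y⟫ := fun x y => by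
    simpa only [real_inner_comm y] using b.sum_inner_mul_inner x y
  simp only [basisLaplacian, hsecond, Finset.sum_add_distrib, ← Finset.mul_sum, hsum,
    b.sum_inner_self]
  linear_combination 4 * p * hX + 4 * hQ

theorem basisLaplacian_sum_projCoeff_eq_zero [Nonempty ι] (v u : E) (n : ℕ) :
    basisLaplacian b
      (fun w => ∑ p ∈ Finset.range (n / 2 + 1),
        projCoeff (Fintype.card ι) n p * ⟪v, v⟫ ^ p * innerMonomial v (n - 2 * p) p w) u = 0 := by
  rw [basisLaplacian_sum b _ fun p _ => contDiff_const.mul (contDiff_innerMonomial v _ _)]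
  simp only [basisLaplacian_const_mul b _ (contDiff_innerMonomial v _ _),
    basisLaplacian_innerMonomial, mul_add]
  refine sum_range_succ_add_eq_zero ?_ (by simp) fun p hp => ?_
  · obtain h | h : n - 2 * (n / 2) = 0 ∨ n - 2 * (n / 2) = 1 := by omega
    all_goals simp [h]
  · have hrec := projCoeff_succ (Fintype.card_pos (α := ι)) (by omega : 2 * (p + 1) ≤ n)
    rw [show n - 2 * p - 2 = n - 2 * (p + 1) by omega, Nat.add_sub_cancel]
    push_cast [Nat.cast_sub (by omega : 2 * p ≤ n), Nat.cast_sub (by omega : 2 * (p + 1) ≤ n)]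
    linear_combination ⟪v, v⟫ ^ (p + 1) * innerMonomial v (n - 2 * (p + 1)) p u * hrec

end BasisLaplacian

/-- **Harmonicity of the projector generating polynomial.** Let `d ≥ 3`,
`n ∈ ℕ`, and for `0 ≤ p ≤ ⌊n/2⌋` set
`a_p = n!(−1)^p Γ(n−p+d/2−1)/(2^{2p} p! (n−2p)! Γ(n+d/2−1))`.  Then for every
fixed `v ∈ ℝ^d` the polynomial
`P(u) = ∑_{p=0}^{⌊n/2⌋} a_p (u·v)^{n−2p} (u·u)^p (v·v)^p` is harmonic in `u`:
`Δ_u P = ∑ᵢ ∂²P/∂uᵢ² = 0` on `ℝ^d`.  In particular `a₀ = 1` and the `a_p`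
satisfy `a_p = −a_{p−1}(n−2p+2)(n−2p+1)/(2p(d+2n−2−2p))`. -/
theorem stmt8 (d n : ℕ) (hd : 3 ≤ d) (v : EuclideanSpace ℝ (Fin d))
    (a : ℕ → ℝ)
    (ha : ∀ p : ℕ, p ≤ n / 2 → a p =
      (n.factorial : ℝ) * (-1 : ℝ) ^ p * Real.Gamma ((n : ℝ) - p + d / 2 - 1) /
        (2 ^ (2 * p) * (p.factorial : ℝ) * ((n - 2 * p).factorial : ℝ) *
          Real.Gamma ((n : ℝ) + d / 2 - 1)))
    (P : EuclideanSpace ℝ (Fin d) → ℝ)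
    (hP : ∀ u : EuclideanSpace ℝ (Fin d), P u =
      ∑ p ∈ Finset.range (n / 2 + 1),
        a p * (∑ i, u i * v i) ^ (n - 2 * p) * (∑ i, u i * u i) ^ p * (∑ i, v i * v i) ^ p) :
    a 0 = 1 ∧
    (∀ p : ℕ, 1 ≤ p → p ≤ n / 2 → a p =
      -a (p - 1) * (((n : ℝ) - 2 * p + 2) * ((n : ℝ) - 2 * p + 1)) /
        (2 * p * ((d : ℝ) + 2 * n - 2 - 2 * p))) ∧
    ∀ u : EuclideanSpace ℝ (Fin d),
      ∑ i, fderiv ℝ (fun w => fderiv ℝ P w (EuclideanSpace.single i (1 : ℝ))) u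
          (EuclideanSpace.single i (1 : ℝ)) = 0 := by
  have ha' : ∀ p ≤ n / 2, a p = projCoeff d n p := ha
  have hd' : (3 : ℝ) ≤ d := by exact_mod_cast hd
  have hΓ : 0 < (n : ℝ) + d / 2 - 1 := by linarith [n.cast_nonneg (α := ℝ)]
  refine ⟨(ha' 0 (Nat.zero_le _)).trans (projCoeff_zero hΓ), fun p hp1 hp => ?_, fun u => ?_⟩
  · rw [ha' p hp, ha' (p - 1) (by omega)]
    exact projCoeff_eq_neg_mul_div (by omega) hp1 (by omega)
  · have hP' : P = fun w => ∑ p ∈ Finset.range (n / 2 + 1),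
        projCoeff (Fintype.card (Fin d)) n p * ⟪v, v⟫ ^ p
          * innerMonomial v (n - 2 * p) p w := by
      funext w
      rw [hP, Fintype.card_fin]
      refine Finset.sum_congr rfl fun p hp => ?_
      rw [ha' p (by rw [Finset.mem_range] at hp; omega)]
      simp only [EuclideanSpace.sum_mul_eq_inner, innerMonomial, real_inner_comm w v]
      ring
    have : Nonempty (Fin d) := ⟨⟨0, by omega⟩⟩
    have h := basisLaplacian_sum_projCoeff_eq_zero (EuclideanSpace.basisFun (Fin d) ℝ) v u n
    rw [← hP'] at h
    simpa [basisLaplacian] using h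
end
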